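/- arXiv:2307.05905 — 4 statements merged into one kernel-verified Lean document; each statement's English description precedes it below -/
import Mathlib

section
/- For every pair of nonnegative integers (p, q) with p + q = 5 and p ≠ 1, the tensor product P₂ × K₅ admits a decomposition into p paths of length 8 and q cycles of length 8. -/
open SimpleGraph Finset

/-- The tensor (categorical) product of two simple graphs. -/
def tensorProd {α β : Type*} (G : SimpleGraph α) (H : SimpleGraph β) :
    SimpleGraph (α × β) where
  Adj x y := G.Adj x.1 y.1 ∧ H.Adj x.2 y.2
  symm := ⟨fun _ _ h => ⟨h.1.symm, h.2.symm⟩⟩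
  loopless := ⟨fun x h => G.loopless.irrefl x.1 h.1⟩

/-- The wreath (lexicographic) product of two simple graphs. -/
def wreathProd {α β : Type*} (G : SimpleGraph α) (H : SimpleGraph β) :
    SimpleGraph (α × β) where
  Adj x y := G.Adj x.1 y.1 ∨ (x.1 = y.1 ∧ H.Adj x.2 y.2)
  symm := ⟨fun _ _ h =>
    h.elim (fun h1 => Or.inl h1.symm) (fun h2 => Or.inr ⟨h2.1.symm, h2.2.symm⟩)⟩
  loopless := ⟨fun x h => h.elim (fun h1 => G.loopless.irrefl x.1 h1) (fun h2 => H.loopless.irrefl x.2 h2.2)⟩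

/-- The complete graph on `2*k` vertices minus the perfect matching pairing `2t` with `2t+1`. -/
def completeMinusF (k : ℕ) : SimpleGraph (Fin (2 * k)) where
  Adj i j := i.val / 2 ≠ j.val / 2
  symm := ⟨fun _ _ h => h.symm⟩
  loopless := ⟨fun _ h => h rfl⟩

/-- An `(8; p, q)`-decomposition of the `l`-fold multigraph `G(l)`: `p` paths of length `8`
and `q` cycles of length `8` in `G` such that every edge of `G` is covered, counted with
multiplicity, exactly `l` times. -/
def IsDecomp8 {α : Type*} [DecidableEq α] (G : SimpleGraph α) (l p q : ℕ) : Prop :=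
  ∃ (P : Fin p → Σ u v : α, G.Walk u v) (C : Fin q → Σ u : α, G.Walk u u),
    (∀ i, (P i).2.2.IsPath ∧ (P i).2.2.length = 8) ∧
    (∀ j, (C j).2.IsCycle ∧ (C j).2.length = 8) ∧
    ∀ e ∈ G.edgeSet,
      ((∑ i, ((P i).2.2.edges.count e)) + ∑ j, ((C j).2.edges.count e)) = l


abbrev G := tensorProd (pathGraph 3) (completeGraph (Fin 5))

instance : DecidableRel G.Adj := fun x y =>
  decidable_of_iff ((x.1.val + 1 = y.1.val ∨ y.1.val + 1 = x.1.val) ∧ x.2 ≠ y.2) (by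
    rw [show G.Adj x y ↔ (pathGraph 3).Adj x.1 y.1 ∧ x.2 ≠ y.2 from Iff.rfl, pathGraph_adj])

def adj (a : Fin 3) (b : Fin 5) (c : Fin 3) (d : Fin 5) (h : G.Adj (a,b) (c,d)) :
    G.Adj (a,b) (c,d) := h

def w0_5_1 : G.Walk (1,1) (1,1) :=
  (.cons (adj 1 1 0 0 (by decide)) (.cons (adj 0 0 1 3 (by decide)) (.cons (adj 1 3 0 1 (by decide)) (.cons (adj 0 1 1 2 (by decide)) (.cons (adj 1 2 2 1 (by decide)) (.cons (adj 2 1 1 4 (by decide)) (.cons (adj 1 4 0 2 (by decide)) (.cons (adj 0 2 1 1 (by decide)) (.nil)))))))))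

def w0_5_2 : G.Walk (0,0) (0,0) :=
  (.cons (adj 0 0 1 2 (by decide)) (.cons (adj 1 2 2 0 (by decide)) (.cons (adj 2 0 1 3 (by decide)) (.cons (adj 1 3 0 2 (by decide)) (.cons (adj 0 2 1 0 (by decide)) (.cons (adj 1 0 0 3 (by decide)) (.cons (adj 0 3 1 4 (by decide)) (.cons (adj 1 4 0 0 (by decide)) (.nil)))))))))

def w0_5_3 : G.Walk (1,0) (1,0) :=
  (.cons (adj 1 0 0 1 (by decide)) (.cons (adj 0 1 1 4 (by decide)) (.cons (adj 1 4 2 2 (by decide)) (.cons (adj 2 2 1 1 (by decide)) (.cons (adj 1 1 2 4 (by decide)) (.cons (adj 2 4 1 3 (by decide)) (.cons (adj 1 3 2 1 (by decide)) (.cons (adj 2 1 1 0 (by decide)) (.nil)))))))))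

def w0_5_4 : G.Walk (1,1) (1,1) :=
  (.cons (adj 1 1 0 3 (by decide)) (.cons (adj 0 3 1 2 (by decide)) (.cons (adj 1 2 0 4 (by decide)) (.cons (adj 0 4 1 0 (by decide)) (.cons (adj 1 0 2 3 (by decide)) (.cons (adj 2 3 1 4 (by decide)) (.cons (adj 1 4 2 0 (by decide)) (.cons (adj 2 0 1 1 (by decide)) (.nil)))))))))

def w0_5_5 : G.Walk (1,1) (1,1) :=
  (.cons (adj 1 1 0 4 (by decide)) (.cons (adj 0 4 1 3 (by decide)) (.cons (adj 1 3 2 2 (by decide)) (.cons (adj 2 2 1 0 (by decide)) (.cons (adj 1 0 2 4 (by decide)) (.cons (adj 2 4 1 2 (by decide)) (.cons (adj 1 2 2 3 (by decide)) (.cons (adj 2 3 1 1 (by decide)) (.nil)))))))))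

def w2_3_6 : G.Walk (1,1) (1,1) :=
  (.cons (adj 1 1 0 0 (by decide)) (.cons (adj 0 0 1 3 (by decide)) (.cons (adj 1 3 0 1 (by decide)) (.cons (adj 0 1 1 2 (by decide)) (.cons (adj 1 2 2 1 (by decide)) (.cons (adj 2 1 1 4 (by decide)) (.cons (adj 1 4 0 2 (by decide)) (.cons (adj 0 2 1 1 (by decide)) (.nil)))))))))

def w2_3_7 : G.Walk (0,0) (0,0) :=
  (.cons (adj 0 0 1 2 (by decide)) (.cons (adj 1 2 2 0 (by decide)) (.cons (adj 2 0 1 3 (by decide)) (.cons (adj 1 3 0 2 (by decide)) (.cons (adj 0 2 1 0 (by decide)) (.cons (adj 1 0 0 3 (by decide)) (.cons (adj 0 3 1 4 (by decide)) (.cons (adj 1 4 0 0 (by decide)) (.nil)))))))))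

def w2_3_8 : G.Walk (1,0) (1,0) :=
  (.cons (adj 1 0 0 1 (by decide)) (.cons (adj 0 1 1 4 (by decide)) (.cons (adj 1 4 2 2 (by decide)) (.cons (adj 2 2 1 1 (by decide)) (.cons (adj 1 1 2 4 (by decide)) (.cons (adj 2 4 1 3 (by decide)) (.cons (adj 1 3 2 1 (by decide)) (.cons (adj 2 1 1 0 (by decide)) (.nil)))))))))

def w2_3_9 : G.Walk (0,3) (2,4) :=
  (.cons (adj 0 3 1 1 (by decide)) (.cons (adj 1 1 2 3 (by decide)) (.cons (adj 2 3 1 0 (by decide)) (.cons (adj 1 0 2 2 (by decide)) (.cons (adj 2 2 1 3 (by decide)) (.cons (adj 1 3 0 4 (by decide)) (.cons (adj 0 4 1 2 (by decide)) (.cons (adj 1 2 2 4 (by decide)) (.nil)))))))))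

def w2_3_10 : G.Walk (0,3) (2,4) :=
  (.cons (adj 0 3 1 2 (by decide)) (.cons (adj 1 2 2 3 (by decide)) (.cons (adj 2 3 1 4 (by decide)) (.cons (adj 1 4 2 0 (by decide)) (.cons (adj 2 0 1 1 (by decide)) (.cons (adj 1 1 0 4 (by decide)) (.cons (adj 0 4 1 0 (by decide)) (.cons (adj 1 0 2 4 (by decide)) (.nil)))))))))

def w3_2_11 : G.Walk (1,1) (1,1) :=
  (.cons (adj 1 1 0 0 (by decide)) (.cons (adj 0 0 1 3 (by decide)) (.cons (adj 1 3 0 1 (by decide)) (.cons (adj 0 1 1 2 (by decide)) (.cons (adj 1 2 2 1 (by decide)) (.cons (adj 2 1 1 4 (by decide)) (.cons (adj 1 4 0 2 (by decide)) (.cons (adj 0 2 1 1 (by decide)) (.nil)))))))))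

def w3_2_12 : G.Walk (0,0) (0,0) :=
  (.cons (adj 0 0 1 2 (by decide)) (.cons (adj 1 2 2 0 (by decide)) (.cons (adj 2 0 1 3 (by decide)) (.cons (adj 1 3 0 2 (by decide)) (.cons (adj 0 2 1 0 (by decide)) (.cons (adj 1 0 0 3 (by decide)) (.cons (adj 0 3 1 4 (by decide)) (.cons (adj 1 4 0 0 (by decide)) (.nil)))))))))

def w3_2_13 : G.Walk (0,1) (0,3) :=
  (.cons (adj 0 1 1 0 (by decide)) (.cons (adj 1 0 2 2 (by decide)) (.cons (adj 2 2 1 3 (by decide)) (.cons (adj 1 3 0 4 (by decide)) (.cons (adj 0 4 1 2 (by decide)) (.cons (adj 1 2 2 4 (by decide)) (.cons (adj 2 4 1 1 (by decide)) (.cons (adj 1 1 0 3 (by decide)) (.nil)))))))))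

def w3_2_14 : G.Walk (0,1) (2,1) :=
  (.cons (adj 0 1 1 4 (by decide)) (.cons (adj 1 4 2 0 (by decide)) (.cons (adj 2 0 1 1 (by decide)) (.cons (adj 1 1 2 3 (by decide)) (.cons (adj 2 3 1 0 (by decide)) (.cons (adj 1 0 2 4 (by decide)) (.cons (adj 2 4 1 3 (by decide)) (.cons (adj 1 3 2 1 (by decide)) (.nil)))))))))

def w3_2_15 : G.Walk (0,3) (2,1) :=
  (.cons (adj 0 3 1 2 (by decide)) (.cons (adj 1 2 2 3 (by decide)) (.cons (adj 2 3 1 4 (by decide)) (.cons (adj 1 4 2 2 (by decide)) (.cons (adj 2 2 1 1 (by decide)) (.cons (adj 1 1 0 4 (by decide)) (.cons (adj 0 4 1 0 (by decide)) (.cons (adj 1 0 2 1 (by decide)) (.nil)))))))))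

def w4_1_16 : G.Walk (1,1) (1,1) :=
  (.cons (adj 1 1 0 0 (by decide)) (.cons (adj 0 0 1 3 (by decide)) (.cons (adj 1 3 0 1 (by decide)) (.cons (adj 0 1 1 2 (by decide)) (.cons (adj 1 2 2 1 (by decide)) (.cons (adj 2 1 1 4 (by decide)) (.cons (adj 1 4 0 2 (by decide)) (.cons (adj 0 2 1 1 (by decide)) (.nil)))))))))

def w4_1_17 : G.Walk (0,0) (2,0) :=
  (.cons (adj 0 0 1 2 (by decide)) (.cons (adj 1 2 0 3 (by decide)) (.cons (adj 0 3 1 1 (by decide)) (.cons (adj 1 1 2 4 (by decide)) (.cons (adj 2 4 1 0 (by decide)) (.cons (adj 1 0 2 3 (by decide)) (.cons (adj 2 3 1 4 (by decide)) (.cons (adj 1 4 2 0 (by decide)) (.nil)))))))))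

def w4_1_18 : G.Walk (0,0) (0,2) :=
  (.cons (adj 0 0 1 4 (by decide)) (.cons (adj 1 4 0 1 (by decide)) (.cons (adj 0 1 1 0 (by decide)) (.cons (adj 1 0 0 4 (by decide)) (.cons (adj 0 4 1 2 (by decide)) (.cons (adj 1 2 2 4 (by decide)) (.cons (adj 2 4 1 3 (by decide)) (.cons (adj 1 3 0 2 (by decide)) (.nil)))))))))

def w4_1_19 : G.Walk (0,2) (0,4) :=
  (.cons (adj 0 2 1 0 (by decide)) (.cons (adj 1 0 0 3 (by decide)) (.cons (adj 0 3 1 4 (by decide)) (.cons (adj 1 4 2 2 (by decide)) (.cons (adj 2 2 1 3 (by decide)) (.cons (adj 1 3 2 0 (by decide)) (.cons (adj 2 0 1 1 (by decide)) (.cons (adj 1 1 0 4 (by decide)) (.nil)))))))))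

def w4_1_20 : G.Walk (0,4) (2,0) :=
  (.cons (adj 0 4 1 3 (by decide)) (.cons (adj 1 3 2 1 (by decide)) (.cons (adj 2 1 1 0 (by decide)) (.cons (adj 1 0 2 2 (by decide)) (.cons (adj 2 2 1 1 (by decide)) (.cons (adj 1 1 2 3 (by decide)) (.cons (adj 2 3 1 2 (by decide)) (.cons (adj 1 2 2 0 (by decide)) (.nil)))))))))

def w5_0_21 : G.Walk (0,0) (2,3) :=
  (.cons (adj 0 0 1 1 (by decide)) (.cons (adj 1 1 2 2 (by decide)) (.cons (adj 2 2 1 0 (by decide)) (.cons (adj 1 0 0 2 (by decide)) (.cons (adj 0 2 1 4 (by decide)) (.cons (adj 1 4 0 1 (by decide)) (.cons (adj 0 1 1 2 (by decide)) (.cons (adj 1 2 2 3 (by decide)) (.nil)))))))))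

def w5_0_22 : G.Walk (0,0) (2,0) :=
  (.cons (adj 0 0 1 2 (by decide)) (.cons (adj 1 2 2 1 (by decide)) (.cons (adj 2 1 1 3 (by decide)) (.cons (adj 1 3 2 4 (by decide)) (.cons (adj 2 4 1 0 (by decide)) (.cons (adj 1 0 2 3 (by decide)) (.cons (adj 2 3 1 4 (by decide)) (.cons (adj 1 4 2 0 (by decide)) (.nil)))))))))

def w5_0_23 : G.Walk (0,0) (0,1) :=
  (.cons (adj 0 0 1 3 (by decide)) (.cons (adj 1 3 2 0 (by decide)) (.cons (adj 2 0 1 2 (by decide)) (.cons (adj 1 2 2 4 (by decide)) (.cons (adj 2 4 1 1 (by decide)) (.cons (adj 1 1 0 4 (by decide)) (.cons (adj 0 4 1 0 (by decide)) (.cons (adj 1 0 0 1 (by decide)) (.nil)))))))))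

def w5_0_24 : G.Walk (0,0) (2,3) :=
  (.cons (adj 0 0 1 4 (by decide)) (.cons (adj 1 4 0 3 (by decide)) (.cons (adj 0 3 1 2 (by decide)) (.cons (adj 1 2 0 4 (by decide)) (.cons (adj 0 4 1 3 (by decide)) (.cons (adj 1 3 0 2 (by decide)) (.cons (adj 0 2 1 1 (by decide)) (.cons (adj 1 1 2 3 (by decide)) (.nil)))))))))

def w5_0_25 : G.Walk (0,1) (2,0) :=
  (.cons (adj 0 1 1 3 (by decide)) (.cons (adj 1 3 2 2 (by decide)) (.cons (adj 2 2 1 4 (by decide)) (.cons (adj 1 4 2 1 (by decide)) (.cons (adj 2 1 1 0 (by decide)) (.cons (adj 1 0 0 3 (by decide)) (.cons (adj 0 3 1 1 (by decide)) (.cons (adj 1 1 2 0 (by decide)) (.nil)))))))))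

set_option maxRecDepth 10000 in
lemma decomp_0_5 : IsDecomp8 G 1 0 5 := by
  refine ⟨![], ![⟨(1,1), w0_5_1⟩, ⟨(0,0), w0_5_2⟩, ⟨(1,0), w0_5_3⟩, ⟨(1,1), w0_5_4⟩, ⟨(1,1), w0_5_5⟩], ?_, ?_, ?_⟩
  · intro i; fin_cases i <;>
      exact ⟨(SimpleGraph.Walk.isPath_def _).mpr (by decide), rfl⟩
  · intro j; fin_cases j <;>
      exact ⟨(SimpleGraph.Walk.isCycle_def _).mpr
        ⟨(SimpleGraph.Walk.isTrail_def _).mpr (by decide), fun h => absurd (congrArg SimpleGraph.Walk.length h) (by decide), by decide⟩, rfl⟩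
  · decide

set_option maxRecDepth 10000 in
lemma decomp_2_3 : IsDecomp8 G 1 2 3 := by
  refine ⟨![⟨(0,3), (2,4), w2_3_9⟩, ⟨(0,3), (2,4), w2_3_10⟩], ![⟨(1,1), w2_3_6⟩, ⟨(0,0), w2_3_7⟩, ⟨(1,0), w2_3_8⟩], ?_, ?_, ?_⟩
  · intro i; fin_cases i <;>
      exact ⟨(SimpleGraph.Walk.isPath_def _).mpr (by decide), rfl⟩
  · intro j; fin_cases j <;>
      exact ⟨(SimpleGraph.Walk.isCycle_def _).mpr
        ⟨(SimpleGraph.Walk.isTrail_def _).mpr (by decide), fun h => absurd (congrArg SimpleGraph.Walk.length h) (by decide), by decide⟩, rfl⟩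
  · decide

set_option maxRecDepth 10000 in
lemma decomp_3_2 : IsDecomp8 G 1 3 2 := by
  refine ⟨![⟨(0,1), (0,3), w3_2_13⟩, ⟨(0,1), (2,1), w3_2_14⟩, ⟨(0,3), (2,1), w3_2_15⟩], ![⟨(1,1), w3_2_11⟩, ⟨(0,0), w3_2_12⟩], ?_, ?_, ?_⟩
  · intro i; fin_cases i <;>
      exact ⟨(SimpleGraph.Walk.isPath_def _).mpr (by decide), rfl⟩
  · intro j; fin_cases j <;>
      exact ⟨(SimpleGraph.Walk.isCycle_def _).mpr
        ⟨(SimpleGraph.Walk.isTrail_def _).mpr (by decide), fun h => absurd (congrArg SimpleGraph.Walk.length h) (by decide), by decide⟩, rfl⟩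
  · decide

set_option maxRecDepth 10000 in
lemma decomp_4_1 : IsDecomp8 G 1 4 1 := by
  refine ⟨![⟨(0,0), (2,0), w4_1_17⟩, ⟨(0,0), (0,2), w4_1_18⟩, ⟨(0,2), (0,4), w4_1_19⟩, ⟨(0,4), (2,0), w4_1_20⟩], ![⟨(1,1), w4_1_16⟩], ?_, ?_, ?_⟩
  · intro i; fin_cases i <;>
      exact ⟨(SimpleGraph.Walk.isPath_def _).mpr (by decide), rfl⟩
  · intro j; fin_cases j <;>
      exact ⟨(SimpleGraph.Walk.isCycle_def _).mpr
        ⟨(SimpleGraph.Walk.isTrail_def _).mpr (by decide), fun h => absurd (congrArg SimpleGraph.Walk.length h) (by decide), by decide⟩, rfl⟩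
  · decide

set_option maxRecDepth 10000 in
lemma decomp_5_0 : IsDecomp8 G 1 5 0 := by
  refine ⟨![⟨(0,0), (2,3), w5_0_21⟩, ⟨(0,0), (2,0), w5_0_22⟩, ⟨(0,0), (0,1), w5_0_23⟩, ⟨(0,0), (2,3), w5_0_24⟩, ⟨(0,1), (2,0), w5_0_25⟩], ![], ?_, ?_, ?_⟩
  · intro i; fin_cases i <;>
      exact ⟨(SimpleGraph.Walk.isPath_def _).mpr (by decide), rfl⟩
  · intro j; fin_cases j <;>
      exact ⟨(SimpleGraph.Walk.isCycle_def _).mpr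
        ⟨(SimpleGraph.Walk.isTrail_def _).mpr (by decide), fun h => absurd (congrArg SimpleGraph.Walk.length h) (by decide), by decide⟩, rfl⟩
  · decide


theorem stmt_4 (p q : ℕ) (hpq : p + q = 5) (hp : p ≠ 1) :
    IsDecomp8 (tensorProd (pathGraph 3) (completeGraph (Fin 5))) 1 p q := by
  have hb : p ≤ 5 := by omega
  interval_cases p
  · obtain rfl : q = 5 := by omega
    exact decomp_0_5
  · exact absurd rfl hp
  · obtain rfl : q = 3 := by omega
    exact decomp_2_3
  · obtain rfl : q = 2 := by omega
    exact decomp_3_2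
  · obtain rfl : q = 1 := by omega
    exact decomp_4_1
  · obtain rfl : q = 0 := by omega
    exact decomp_5_0
end

section
/- The tensor product C₄ × K₃ admits a decomposition into p paths of length 8 and q cycles of length 8 for each (p,q) ∈ {(0,3),(2,1),(3,0)}. -/
open SimpleGraph Finset

instance tensorProdAdjDec {α β : Type*} (G : SimpleGraph α) (H : SimpleGraph β)
    [DecidableRel G.Adj] [DecidableRel H.Adj] : DecidableRel (tensorProd G H).Adj :=
  fun _ _ => inferInstanceAs (Decidable (_ ∧ _))

instance completeAdjDec {α : Type*} [DecidableEq α] : DecidableRel (completeGraph α).Adj :=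
  fun a b => inferInstanceAs (Decidable (a ≠ b))

instance isTrailDec {α : Type*} [DecidableEq α] {G : SimpleGraph α} {u v : α}
    (p : G.Walk u v) : Decidable p.IsTrail :=
  decidable_of_iff p.edges.Nodup (Walk.isTrail_def p).symm

instance (priority := 2000) isPathDec {α : Type*} [DecidableEq α] {G : SimpleGraph α} {u v : α}
    (p : G.Walk u v) : Decidable p.IsPath :=
  decidable_of_iff p.support.Nodup (Walk.isPath_def p).symm

lemma ne_nil_iff_length {α : Type*} {G : SimpleGraph α} {u : α} {p : G.Walk u u} :
    p ≠ SimpleGraph.Walk.nil ↔ p.length ≠ 0 := by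
  constructor
  · intro h hl
    cases p with
    | nil => exact h rfl
    | cons h' q => simp at hl
  · intro h hn
    subst hn
    exact h rfl

instance (priority := 2000) isCycleDec {α : Type*} [DecidableEq α] {G : SimpleGraph α} {u : α}
    (p : G.Walk u u) : Decidable p.IsCycle :=
  decidable_of_iff (p.edges.Nodup ∧ p.length ≠ 0 ∧ p.support.tail.Nodup) (by
    rw [SimpleGraph.Walk.isCycle_def, Walk.isTrail_def, ne_nil_iff_length])

abbrev GG : SimpleGraph (Fin 4 × Fin 3) := tensorProd (cycleGraph 4) (completeGraph (Fin 3))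

def C03_0 : Σ u : Fin 4 × Fin 3, GG.Walk u u := ⟨_, (SimpleGraph.Walk.cons (u := ((3:Fin 4),(0:Fin 3))) (v := ((2:Fin 4),(1:Fin 3))) (by decide) (SimpleGraph.Walk.cons (u := ((2:Fin 4),(1:Fin 3))) (v := ((1:Fin 4),(0:Fin 3))) (by decide) (SimpleGraph.Walk.cons (u := ((1:Fin 4),(0:Fin 3))) (v := ((2:Fin 4),(2:Fin 3))) (by decide) (SimpleGraph.Walk.cons (u := ((2:Fin 4),(2:Fin 3))) (v := ((1:Fin 4),(1:Fin 3))) (by decide) (SimpleGraph.Walk.cons (u := ((1:Fin 4),(1:Fin 3))) (v := ((2:Fin 4),(0:Fin 3))) (by decide) (SimpleGraph.Walk.cons (u := ((2:Fin 4),(0:Fin 3))) (v := ((1:Fin 4),(2:Fin 3))) (by decide) (SimpleGraph.Walk.cons (u := ((1:Fin 4),(2:Fin 3))) (v := ((0:Fin 4),(1:Fin 3))) (by decide) (SimpleGraph.Walk.cons (u := ((0:Fin 4),(1:Fin 3))) (v := ((3:Fin 4),(0:Fin 3))) (by decide) SimpleGraph.Walk.nil))))))))⟩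

def C03_1 : Σ u : Fin 4 × Fin 3, GG.Walk u u := ⟨_, (SimpleGraph.Walk.cons (u := ((2:Fin 4),(2:Fin 3))) (v := ((3:Fin 4),(1:Fin 3))) (by decide) (SimpleGraph.Walk.cons (u := ((3:Fin 4),(1:Fin 3))) (v := ((2:Fin 4),(0:Fin 3))) (by decide) (SimpleGraph.Walk.cons (u := ((2:Fin 4),(0:Fin 3))) (v := ((3:Fin 4),(2:Fin 3))) (by decide) (SimpleGraph.Walk.cons (u := ((3:Fin 4),(2:Fin 3))) (v := ((0:Fin 4),(0:Fin 3))) (by decide) (SimpleGraph.Walk.cons (u := ((0:Fin 4),(0:Fin 3))) (v := ((1:Fin 4),(1:Fin 3))) (by decide) (SimpleGraph.Walk.cons (u := ((1:Fin 4),(1:Fin 3))) (v := ((0:Fin 4),(2:Fin 3))) (by decide) (SimpleGraph.Walk.cons (u := ((0:Fin 4),(2:Fin 3))) (v := ((3:Fin 4),(0:Fin 3))) (by decide) (SimpleGraph.Walk.cons (u := ((3:Fin 4),(0:Fin 3))) (v := ((2:Fin 4),(2:Fin 3))) (by decide) SimpleGraph.Walk.nil))))))))⟩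

def C03_2 : Σ u : Fin 4 × Fin 3, GG.Walk u u := ⟨_, (SimpleGraph.Walk.cons (u := ((0:Fin 4),(2:Fin 3))) (v := ((3:Fin 4),(1:Fin 3))) (by decide) (SimpleGraph.Walk.cons (u := ((3:Fin 4),(1:Fin 3))) (v := ((0:Fin 4),(0:Fin 3))) (by decide) (SimpleGraph.Walk.cons (u := ((0:Fin 4),(0:Fin 3))) (v := ((1:Fin 4),(2:Fin 3))) (by decide) (SimpleGraph.Walk.cons (u := ((1:Fin 4),(2:Fin 3))) (v := ((2:Fin 4),(1:Fin 3))) (by decide) (SimpleGraph.Walk.cons (u := ((2:Fin 4),(1:Fin 3))) (v := ((3:Fin 4),(2:Fin 3))) (by decide) (SimpleGraph.Walk.cons (u := ((3:Fin 4),(2:Fin 3))) (v := ((0:Fin 4),(1:Fin 3))) (by decide) (SimpleGraph.Walk.cons (u := ((0:Fin 4),(1:Fin 3))) (v := ((1:Fin 4),(0:Fin 3))) (by decide) (SimpleGraph.Walk.cons (u := ((1:Fin 4),(0:Fin 3))) (v := ((0:Fin 4),(2:Fin 3))) (by decide) SimpleGraph.Walk.nil))))))))⟩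

def P21_0 : Σ u v : Fin 4 × Fin 3, GG.Walk u v := ⟨_, _, (SimpleGraph.Walk.cons (u := ((1:Fin 4),(1:Fin 3))) (v := ((2:Fin 4),(2:Fin 3))) (by decide) (SimpleGraph.Walk.cons (u := ((2:Fin 4),(2:Fin 3))) (v := ((1:Fin 4),(0:Fin 3))) (by decide) (SimpleGraph.Walk.cons (u := ((1:Fin 4),(0:Fin 3))) (v := ((0:Fin 4),(1:Fin 3))) (by decide) (SimpleGraph.Walk.cons (u := ((0:Fin 4),(1:Fin 3))) (v := ((1:Fin 4),(2:Fin 3))) (by decide) (SimpleGraph.Walk.cons (u := ((1:Fin 4),(2:Fin 3))) (v := ((0:Fin 4),(0:Fin 3))) (by decide) (SimpleGraph.Walk.cons (u := ((0:Fin 4),(0:Fin 3))) (v := ((3:Fin 4),(1:Fin 3))) (by decide) (SimpleGraph.Walk.cons (u := ((3:Fin 4),(1:Fin 3))) (v := ((0:Fin 4),(2:Fin 3))) (by decide) (SimpleGraph.Walk.cons (u := ((0:Fin 4),(2:Fin 3))) (v := ((3:Fin 4),(0:Fin 3))) (by decide) SimpleGraph.Walk.nil))))))))⟩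

def P21_1 : Σ u v : Fin 4 × Fin 3, GG.Walk u v := ⟨_, _, (SimpleGraph.Walk.cons (u := ((3:Fin 4),(0:Fin 3))) (v := ((2:Fin 4),(2:Fin 3))) (by decide) (SimpleGraph.Walk.cons (u := ((2:Fin 4),(2:Fin 3))) (v := ((3:Fin 4),(1:Fin 3))) (by decide) (SimpleGraph.Walk.cons (u := ((3:Fin 4),(1:Fin 3))) (v := ((2:Fin 4),(0:Fin 3))) (by decide) (SimpleGraph.Walk.cons (u := ((2:Fin 4),(0:Fin 3))) (v := ((3:Fin 4),(2:Fin 3))) (by decide) (SimpleGraph.Walk.cons (u := ((3:Fin 4),(2:Fin 3))) (v := ((2:Fin 4),(1:Fin 3))) (by decide) (SimpleGraph.Walk.cons (u := ((2:Fin 4),(1:Fin 3))) (v := ((1:Fin 4),(0:Fin 3))) (by decide) (SimpleGraph.Walk.cons (u := ((1:Fin 4),(0:Fin 3))) (v := ((0:Fin 4),(2:Fin 3))) (by decide) (SimpleGraph.Walk.cons (u := ((0:Fin 4),(2:Fin 3))) (v := ((1:Fin 4),(1:Fin 3))) (by decide) SimpleGraph.Walk.nil))))))))⟩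

def C21_0 : Σ u : Fin 4 × Fin 3, GG.Walk u u := ⟨_, (SimpleGraph.Walk.cons (u := ((3:Fin 4),(2:Fin 3))) (v := ((0:Fin 4),(1:Fin 3))) (by decide) (SimpleGraph.Walk.cons (u := ((0:Fin 4),(1:Fin 3))) (v := ((3:Fin 4),(0:Fin 3))) (by decide) (SimpleGraph.Walk.cons (u := ((3:Fin 4),(0:Fin 3))) (v := ((2:Fin 4),(1:Fin 3))) (by decide) (SimpleGraph.Walk.cons (u := ((2:Fin 4),(1:Fin 3))) (v := ((1:Fin 4),(2:Fin 3))) (by decide) (SimpleGraph.Walk.cons (u := ((1:Fin 4),(2:Fin 3))) (v := ((2:Fin 4),(0:Fin 3))) (by decide) (SimpleGraph.Walk.cons (u := ((2:Fin 4),(0:Fin 3))) (v := ((1:Fin 4),(1:Fin 3))) (by decide) (SimpleGraph.Walk.cons (u := ((1:Fin 4),(1:Fin 3))) (v := ((0:Fin 4),(0:Fin 3))) (by decide) (SimpleGraph.Walk.cons (u := ((0:Fin 4),(0:Fin 3))) (v := ((3:Fin 4),(2:Fin 3))) (by decide) SimpleGraph.Walk.nil))))))))⟩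

def P30_0 : Σ u v : Fin 4 × Fin 3, GG.Walk u v := ⟨_, _, (SimpleGraph.Walk.cons (u := ((1:Fin 4),(0:Fin 3))) (v := ((0:Fin 4),(1:Fin 3))) (by decide) (SimpleGraph.Walk.cons (u := ((0:Fin 4),(1:Fin 3))) (v := ((3:Fin 4),(2:Fin 3))) (by decide) (SimpleGraph.Walk.cons (u := ((3:Fin 4),(2:Fin 3))) (v := ((2:Fin 4),(0:Fin 3))) (by decide) (SimpleGraph.Walk.cons (u := ((2:Fin 4),(0:Fin 3))) (v := ((1:Fin 4),(2:Fin 3))) (by decide) (SimpleGraph.Walk.cons (u := ((1:Fin 4),(2:Fin 3))) (v := ((2:Fin 4),(1:Fin 3))) (by decide) (SimpleGraph.Walk.cons (u := ((2:Fin 4),(1:Fin 3))) (v := ((3:Fin 4),(0:Fin 3))) (by decide) (SimpleGraph.Walk.cons (u := ((3:Fin 4),(0:Fin 3))) (v := ((0:Fin 4),(2:Fin 3))) (by decide) (SimpleGraph.Walk.cons (u := ((0:Fin 4),(2:Fin 3))) (v := ((3:Fin 4),(1:Fin 3))) (by decide) SimpleGraph.Walk.nil))))))))⟩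

def P30_1 : Σ u v : Fin 4 × Fin 3, GG.Walk u v := ⟨_, _, (SimpleGraph.Walk.cons (u := ((1:Fin 4),(0:Fin 3))) (v := ((0:Fin 4),(2:Fin 3))) (by decide) (SimpleGraph.Walk.cons (u := ((0:Fin 4),(2:Fin 3))) (v := ((1:Fin 4),(1:Fin 3))) (by decide) (SimpleGraph.Walk.cons (u := ((1:Fin 4),(1:Fin 3))) (v := ((0:Fin 4),(0:Fin 3))) (by decide) (SimpleGraph.Walk.cons (u := ((0:Fin 4),(0:Fin 3))) (v := ((3:Fin 4),(1:Fin 3))) (by decide) (SimpleGraph.Walk.cons (u := ((3:Fin 4),(1:Fin 3))) (v := ((2:Fin 4),(2:Fin 3))) (by decide) (SimpleGraph.Walk.cons (u := ((2:Fin 4),(2:Fin 3))) (v := ((3:Fin 4),(0:Fin 3))) (by decide) (SimpleGraph.Walk.cons (u := ((3:Fin 4),(0:Fin 3))) (v := ((0:Fin 4),(1:Fin 3))) (by decide) (SimpleGraph.Walk.cons (u := ((0:Fin 4),(1:Fin 3))) (v := ((1:Fin 4),(2:Fin 3))) (by decide) SimpleGraph.Walk.nil))))))))⟩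

def P30_2 : Σ u v : Fin 4 × Fin 3, GG.Walk u v := ⟨_, _, (SimpleGraph.Walk.cons (u := ((3:Fin 4),(1:Fin 3))) (v := ((2:Fin 4),(0:Fin 3))) (by decide) (SimpleGraph.Walk.cons (u := ((2:Fin 4),(0:Fin 3))) (v := ((1:Fin 4),(1:Fin 3))) (by decide) (SimpleGraph.Walk.cons (u := ((1:Fin 4),(1:Fin 3))) (v := ((2:Fin 4),(2:Fin 3))) (by decide) (SimpleGraph.Walk.cons (u := ((2:Fin 4),(2:Fin 3))) (v := ((1:Fin 4),(0:Fin 3))) (by decide) (SimpleGraph.Walk.cons (u := ((1:Fin 4),(0:Fin 3))) (v := ((2:Fin 4),(1:Fin 3))) (by decide) (SimpleGraph.Walk.cons (u := ((2:Fin 4),(1:Fin 3))) (v := ((3:Fin 4),(2:Fin 3))) (by decide) (SimpleGraph.Walk.cons (u := ((3:Fin 4),(2:Fin 3))) (v := ((0:Fin 4),(0:Fin 3))) (by decide) (SimpleGraph.Walk.cons (u := ((0:Fin 4),(0:Fin 3))) (v := ((1:Fin 4),(2:Fin 3))) (by decide) SimpleGraph.Walk.nil))))))))⟩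


theorem stmt_10 (p q : ℕ)
    (h : (p, q) = (0, 3) ∨ (p, q) = (2, 1) ∨ (p, q) = (3, 0)) :
    IsDecomp8 (tensorProd (cycleGraph 4) (completeGraph (Fin 3))) 1 p q := by
  rcases h with h | h | h <;>
    obtain ⟨rfl, rfl⟩ := Prod.mk.injEq .. ▸ Prod.mk.inj h
  · exact ⟨![], ![C03_0, C03_1, C03_2], by decide, by decide, by decide⟩
  · exact ⟨![P21_0, P21_1], ![C21_0], by decide, by decide, by decide⟩
  · exact ⟨![P30_0, P30_1, P30_2], ![], by decide, by decide, by decide⟩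
end

section
/- If the wreath product Kₘ ∘ K̄₂ admits a decomposition into paths of length 8 and cycles of length 8, then for every t ≥ 1 the wreath product Kₘ ∘ K̄₂ₜ admits such a decomposition; this uses the isomorphism Kₘ ∘ K̄₂ₜ ≅ (Kₘ ∘ K̄₂) ∘ K̄ₜ, which decomposes into t copies of Kₘ ∘ K̄₂ and t(t−1)/2 copies of (Kₘ ∘ K̄₂) × K₂. -/
open SimpleGraph Finset

namespace Aux13

open SimpleGraph Walk

abbrev V (m : ℕ) := Fin m × Fin 2
abbrev Vt (m t : ℕ) := Fin m × Fin (2 * t)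
abbrev G (m : ℕ) : SimpleGraph (V m) := wreathProd (completeGraph (Fin m)) ⊥
abbrev Gt (m t : ℕ) : SimpleGraph (Vt m t) := wreathProd (completeGraph (Fin m)) ⊥

lemma wadj {m k : ℕ} {x y : Fin m × Fin k} :
    (wreathProd (completeGraph (Fin m)) (⊥ : SimpleGraph (Fin k))).Adj x y ↔ x.1 ≠ y.1 := by
  show x.1 ≠ y.1 ∨ (x.1 = y.1 ∧ (⊥ : SimpleGraph (Fin k)).Adj x.2 y.2) ↔ _
  simp

def enc {t : ℕ} (s : Fin t) (i : Fin 2) : Fin (2 * t) :=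
  ⟨2 * s.val + i.val, by have := s.isLt; have := i.isLt; omega⟩

@[simp] lemma enc_val {t : ℕ} (s : Fin t) (i : Fin 2) : (enc s i).val = 2 * s.val + i.val := rfl

lemma enc_inj {t : ℕ} {s s' : Fin t} {i i' : Fin 2} : enc s i = enc s' i' ↔ s = s' ∧ i = i' := by
  have := i.isLt; have := i'.isLt
  simp only [Fin.ext_iff, enc_val]
  omega

def gdec {m t : ℕ} (z : Vt m t) : V m := (z.1, ⟨z.2.val % 2, by omega⟩)

def B {m t : ℕ} (z : Vt m t) : ℕ := z.2.val / 2

def trv {m : ℕ} (t : ℕ) (s s' : Fin t) (b : Bool) (x : V m) : Vt m t :=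
  (x.1, enc (bif b then s else s') x.2)

@[simp] lemma gdec_trv {m t : ℕ} (s s' : Fin t) (b : Bool) (x : V m) :
    gdec (trv t s s' b x) = x := by
  have := x.2.isLt
  refine Prod.ext rfl (Fin.ext ?_)
  show (2 * ((bif b then s else s') : Fin t).val + x.2.val) % 2 = x.2.val
  omega

lemma B_trv {m t : ℕ} (s s' : Fin t) (b : Bool) (x : V m) :
    B (trv t s s' b x) = ((bif b then s else s') : Fin t).val := by
  have := x.2.isLt
  show (2 * ((bif b then s else s') : Fin t).val + x.2.val) / 2 = _
  omega

lemma B_enc {m t : ℕ} (a : Fin m) (s : Fin t) (i : Fin 2) :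
    B ((a, enc s i) : Vt m t) = s.val := by
  have := i.isLt
  show (2 * s.val + i.val) / 2 = s.val
  omega

def parf (b : Bool) (n : ℕ) : Bool := if n % 2 = 1 then !b else b

lemma parf_zero (b : Bool) : parf b 0 = b := by simp [parf]

lemma parf_succ (b : Bool) (n : ℕ) : parf b (n + 1) = parf (!b) n := by
  rcases Nat.mod_two_eq_zero_or_one n with h | h <;>
    simp [parf, Nat.add_mod, h]

lemma parf_even {n : ℕ} (h : n % 2 = 0) (b : Bool) : parf b n = b := by simp [parf, h]

def fhom (m t : ℕ) (s : Fin t) : G m →g Gt m t where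
  toFun := fun x => (x.1, enc s x.2)
  map_rel' := by
    intro a b hab
    rw [wadj] at hab ⊢
    exact hab

@[simp] lemma fhom_apply (m t : ℕ) (s : Fin t) (x : V m) :
    fhom m t s x = (x.1, enc s x.2) := rfl

lemma fhom_inj (m t : ℕ) (s : Fin t) : Function.Injective (fhom m t s) := by
  intro a b hab
  simp only [fhom_apply, Prod.mk.injEq, enc_inj] at hab
  exact Prod.ext hab.1 hab.2.2

lemma B_fhom {m t : ℕ} (s : Fin t) (x : V m) : B (fhom m t s x) = s.val := B_enc _ _ _

def lift (m t : ℕ) (s s' : Fin t) : {x y : V m} → (W : (G m).Walk x y) → (b : Bool) →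
    (Gt m t).Walk (trv t s s' b x) (trv t s s' (parf b W.length) y)
  | x, _, .nil, b =>
      (Walk.nil : (Gt m t).Walk (trv t s s' b x) (trv t s s' b x)).copy rfl
        (by rw [Walk.length_nil, parf_zero])
  | x, y, @Walk.cons _ _ _ z _ hadj W, b =>
      ((Walk.cons (show (Gt m t).Adj (trv t s s' b x) (trv t s s' (!b) z) from
          wadj.mpr (wadj.mp hadj)) (lift m t s s' W (!b))) :
        (Gt m t).Walk (trv t s s' b x) (trv t s s' (parf (!b) W.length) y)).copy rfl
        (by rw [Walk.length_cons, parf_succ])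

lemma length_lift {m t : ℕ} (s s' : Fin t) {x y : V m} (W : (G m).Walk x y) (b : Bool) :
    (lift m t s s' W b).length = W.length := by
  induction W generalizing b with
  | nil => rw [lift]; exact Walk.length_copy _ _ _
  | cons hadj W ih => rw [lift]; erw [Walk.length_copy]; simp [ih]

lemma support_lift {m t : ℕ} (s s' : Fin t) {x y : V m} (W : (G m).Walk x y) (b : Bool) :
    ((lift m t s s' W b).support).map gdec = W.support := by
  induction W generalizing b with
  | nil => rw [lift]; erw [Walk.support_copy]; simp
  | cons hadj W ih => rw [lift]; erw [Walk.support_copy]; simp [ih]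

lemma edges_lift {m t : ℕ} (s s' : Fin t) {x y : V m} (W : (G m).Walk x y) (b : Bool) :
    ((lift m t s s' W b).edges).map (Sym2.map gdec) = W.edges := by
  induction W generalizing b with
  | nil => rw [lift]; erw [Walk.edges_copy]; simp
  | cons hadj W ih => rw [lift]; erw [Walk.edges_copy]; simp [ih, Sym2.map_pair_eq]

lemma B_lift_mem {m t : ℕ} (s s' : Fin t) {x y : V m} (W : (G m).Walk x y) (b : Bool)
    {e' : Sym2 (Vt m t)} (h : e' ∈ (lift m t s s' W b).edges) :
    Sym2.map B e' = s(s.val, s'.val) := by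
  induction W generalizing b with
  | nil => rw [lift] at h; erw [Walk.edges_copy] at h; simp at h
  | cons hadj W ih =>
    simp only [lift, Walk.edges_copy, Walk.edges_cons, List.mem_cons] at h
    rcases h with rfl | h
    · rw [Sym2.map_pair_eq, B_trv, B_trv]
      cases b
      · exact Sym2.eq_swap
      · rfl
    · exact ih _ h

lemma B_map_mem {m t : ℕ} (s : Fin t) {x y : V m} (W : (G m).Walk x y)
    {e' : Sym2 (Vt m t)} (h : e' ∈ (W.map (fhom m t s)).edges) :
    Sym2.map B e' = s(s.val, s.val) := by
  rw [Walk.edges_map] at h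
  rcases List.mem_map.1 h with ⟨e₀, -, rfl⟩
  induction e₀ using Sym2.ind with
  | _ a c => simp [Sym2.map_pair_eq, B_fhom, B_enc]

set_option maxHeartbeats 1000000 in
lemma key {m t : ℕ} (s s' : Fin t) (hss : s ≠ s') {a c : Fin m} (hac : a ≠ c)
    (i j : Fin 2) (x1 z1 : Fin m) (x2 z2 : Fin 2) :
    ((if (s((x1, enc s x2), (z1, enc s' z2)) : Sym2 (Vt m t)) = s((a, enc s i), (c, enc s' j))
        then 1 else 0) : ℕ)
      + (if (s((x1, enc s' x2), (z1, enc s z2)) : Sym2 (Vt m t)) = s((a, enc s i), (c, enc s' j))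
        then 1 else 0)
      = if (s((x1, x2), (z1, z2)) : Sym2 (V m)) = s((a, i), (c, j)) then 1 else 0 := by
  have hi := i.isLt; have hj := j.isLt; have hx2 := x2.isLt; have hz2 := z2.isLt
  have hss' : s.val ≠ s'.val := fun hh => hss (Fin.ext hh)
  have hac' : a.val ≠ c.val := fun hh => hac (Fin.ext hh)
  simp only [Sym2.eq_iff, Prod.mk.injEq, Fin.ext_iff, enc_val]
  split_ifs <;> omega

lemma key2 {m t : ℕ} (s s' : Fin t) (hss : s ≠ s') {a c : Fin m} (hac : a ≠ c)
    (i j : Fin 2) (xu xv : V m) (b : Bool) :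
    ((if (s(trv t s s' b xu, trv t s s' (!b) xv) : Sym2 (Vt m t))
          = s((a, enc s i), (c, enc s' j)) then 1 else 0) : ℕ)
      + (if (s(trv t s s' (!b) xu, trv t s s' (!!b) xv) : Sym2 (Vt m t))
          = s((a, enc s i), (c, enc s' j)) then 1 else 0)
      = if (s(xu, xv) : Sym2 (V m)) = s((a, i), (c, j)) then 1 else 0 := by
  have hk := key (m := m) (t := t) s s' hss hac i j xu.1 xv.1 xu.2 xv.2
  rw [Prod.mk.eta, Prod.mk.eta] at hk
  cases b
  · simp only [Bool.not_false, Bool.not_true, trv, Bool.cond_true, Bool.cond_false]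
    omega
  · simp only [Bool.not_false, Bool.not_true, trv, Bool.cond_true, Bool.cond_false]
    omega

lemma count_lift {m t : ℕ} (s s' : Fin t) (hss : s ≠ s') {a c : Fin m} (hac : a ≠ c)
    (i j : Fin 2) {x y : V m} (W : (G m).Walk x y) (b : Bool) :
    ((lift m t s s' W b).edges.count s((a, enc s i), (c, enc s' j)))
      + ((lift m t s s' W (!b)).edges.count s((a, enc s i), (c, enc s' j)))
    = W.edges.count s((a, i), (c, j)) := by
  induction W generalizing b with
  | nil => rw [lift, lift]; erw [Walk.edges_copy]; simp
  | cons hadj W ih =>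
    rename_i xu xv xw
    have hk2 := key2 (m := m) (t := t) s s' hss hac i j xu xv b
    have ih' := ih (!b)
    simp only [lift, Walk.edges_copy, Walk.edges_cons, List.count_cons, beq_iff_eq] at *
    omega

lemma count_map_fhom {m t : ℕ} (s : Fin t) (a c : Fin m) (i j : Fin 2)
    {x y : V m} (W : (G m).Walk x y) :
    (W.map (fhom m t s)).edges.count s((a, enc s i), (c, enc s j))
      = W.edges.count s((a, i), (c, j)) := by
  rw [Walk.edges_map,
    show (s((a, enc s i), (c, enc s j)) : Sym2 (Vt m t))
        = Sym2.map (fhom m t s) s((a, i), (c, j)) from by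
      rw [Sym2.map_pair_eq]; rfl]
  exact List.count_map_of_injective _ _ (Sym2.map.injective (fhom_inj m t s)) _

abbrev Pairs (t : ℕ) := {z : Fin t × Fin t // z.1 < z.2}

abbrev K (t : ℕ) := Fin t ⊕ (Pairs t × Bool)

lemma sum_K {m t : ℕ} (u v : Fin t) {a c : Fin m} (hac : a ≠ c) (i j : Fin 2)
    {x y : V m} (W : (G m).Walk x y) :
    ((∑ s : Fin t, (W.map (fhom m t s)).edges.count s((a, enc u i), (c, enc v j)))
      + ∑ z : Pairs t, ∑ b : Bool,
          (lift m t z.1.1 z.1.2 W b).edges.count s((a, enc u i), (c, enc v j)))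
    = W.edges.count s((a, i), (c, j)) := by
  by_cases huv : u = v
  · subst huv
    have h2 : ∀ z : Pairs t, ∀ b : Bool,
        (lift m t z.1.1 z.1.2 W b).edges.count s((a, enc u i), (c, enc u j)) = 0 := by
      intro z b
      rw [List.count_eq_zero]
      intro hmem
      have hB := B_lift_mem _ _ _ _ hmem
      rw [Sym2.map_pair_eq, B_enc, B_enc] at hB
      rw [Sym2.eq_iff] at hB
      have hlt := z.2
      rcases hB with ⟨h1, h2⟩ | ⟨h1, h2⟩ <;>
        · rw [show z.1.1 = z.1.2 from Fin.ext (by omega)] at hlt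
          exact absurd hlt (lt_irrefl _)
    simp only [h2, Finset.sum_const_zero, add_zero]
    rw [Finset.sum_eq_single u]
    · exact count_map_fhom u a c i j W
    · intro s _ hs
      rw [List.count_eq_zero]
      intro hmem
      have hB := B_map_mem _ _ hmem
      rw [Sym2.map_pair_eq, B_enc, B_enc, Sym2.eq_iff] at hB
      exact hs (Fin.ext (by omega))
    · intro hu; exact absurd (Finset.mem_univ u) hu
  · have h1 : ∀ s : Fin t,
        (W.map (fhom m t s)).edges.count s((a, enc u i), (c, enc v j)) = 0 := by
      intro s
      rw [List.count_eq_zero]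
      intro hmem
      have hB := B_map_mem _ _ hmem
      rw [Sym2.map_pair_eq, B_enc, B_enc, Sym2.eq_iff] at hB
      exact huv (Fin.ext (by omega))
    simp only [h1, Finset.sum_const_zero, zero_add]
    have hne : u.val ≠ v.val := fun hh => huv (Fin.ext hh)
    by_cases hlt : u < v
    · rw [Finset.sum_eq_single (⟨(u, v), hlt⟩ : Pairs t)]
      · rw [Fintype.sum_bool]
        have := count_lift u v (ne_of_lt hlt) hac i j W true
        exact this
      · intro z _ hz
        apply Finset.sum_eq_zero
        intro b _
        rw [List.count_eq_zero]
        intro hmem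
        have hB := B_lift_mem _ _ _ _ hmem
        rw [Sym2.map_pair_eq, B_enc, B_enc, Sym2.eq_iff] at hB
        have hzlt := z.2
        apply hz
        have hval : z.1.1 = u ∧ z.1.2 = v := by
          rcases hB with ⟨ha, hb⟩ | ⟨ha, hb⟩
          · exact ⟨Fin.ext ha.symm, Fin.ext hb.symm⟩
          · exfalso
            simp only [Fin.lt_def] at hzlt hlt
            omega
        ext1
        exact Prod.ext hval.1 hval.2
      · intro hu; exact absurd (Finset.mem_univ _) hu
    · have hlt' : v < u := by
        rcases lt_trichotomy u v with h | h | h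
        · exact absurd h hlt
        · exact absurd h huv
        · exact h
      rw [Finset.sum_eq_single (⟨(v, u), hlt'⟩ : Pairs t)]
      · rw [Fintype.sum_bool]
        have := count_lift v u (ne_of_lt hlt') (fun hh => hac hh.symm) j i W true
        rw [show (s((c, enc v j), (a, enc u i)) : Sym2 (Vt m t))
            = s((a, enc u i), (c, enc v j)) from Sym2.eq_swap,
          show (s((c, j), (a, i)) : Sym2 (V m)) = s((a, i), (c, j)) from Sym2.eq_swap] at this
        exact this
      · intro z _ hz
        apply Finset.sum_eq_zero
        intro b _
        rw [List.count_eq_zero]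
        intro hmem
        have hB := B_lift_mem _ _ _ _ hmem
        rw [Sym2.map_pair_eq, B_enc, B_enc, Sym2.eq_iff] at hB
        have hzlt := z.2
        apply hz
        have hval : z.1.1 = v ∧ z.1.2 = u := by
          rcases hB with ⟨ha, hb⟩ | ⟨ha, hb⟩
          · exfalso
            simp only [Fin.lt_def] at hzlt hlt'
            omega
          · exact ⟨Fin.ext hb.symm, Fin.ext ha.symm⟩
        ext1
        exact Prod.ext hval.1 hval.2
      · intro hu; exact absurd (Finset.mem_univ _) hu

def pieceP (m t : ℕ) (W : Σ x y : V m, (G m).Walk x y) :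
    K t → Σ u v : Vt m t, (Gt m t).Walk u v
  | .inl s => ⟨_, _, W.2.2.map (fhom m t s)⟩
  | .inr (z, b) => ⟨_, _, lift m t z.1.1 z.1.2 W.2.2 b⟩

def pieceC (m t : ℕ) (W : Σ x : V m, (G m).Walk x x) (h8 : W.2.length % 2 = 0) :
    K t → Σ u : Vt m t, (Gt m t).Walk u u
  | .inl s => ⟨_, W.2.map (fhom m t s)⟩
  | .inr (z, b) => ⟨_, (lift m t z.1.1 z.1.2 W.2 b).copy rfl (by rw [parf_even h8])⟩


lemma pieceP_prop {m t : ℕ} (W : Σ x y : V m, (G m).Walk x y)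
    (hW : W.2.2.IsPath) (hl : W.2.2.length = 8) (k : K t) :
    (pieceP m t W k).2.2.IsPath ∧ (pieceP m t W k).2.2.length = 8 := by
  rcases k with sl | ⟨z, b⟩
  · refine ⟨Walk.map_isPath_of_injective (fhom_inj m t sl) hW, ?_⟩
    show (W.2.2.map (fhom m t sl)).length = 8
    rw [Walk.length_map, hl]
  · constructor
    · rw [Walk.isPath_def]
      refine List.Nodup.of_map gdec ?_
      show ((lift m t z.1.1 z.1.2 W.2.2 b).support.map gdec).Nodup
      rw [support_lift]
      exact hW.support_nodup
    · show (lift m t z.1.1 z.1.2 W.2.2 b).length = 8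
      rw [length_lift, hl]

lemma pieceC_prop {m t : ℕ} (W : Σ x : V m, (G m).Walk x x) (h8 : W.2.length % 2 = 0)
    (hW : W.2.IsCycle) (hl : W.2.length = 8) (k : K t) :
    (pieceC m t W h8 k).2.IsCycle ∧ (pieceC m t W h8 k).2.length = 8 := by
  rcases k with sl | ⟨z, b⟩
  · refine ⟨(Walk.map_isCycle_iff_of_injective (fhom_inj m t sl)).mpr hW, ?_⟩
    show (W.2.map (fhom m t sl)).length = 8
    rw [Walk.length_map, hl]
  · have hlen : (pieceC m t W h8 (Sum.inr (z, b))).2.length = 8 := by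
      show ((lift m t z.1.1 z.1.2 W.2 b).copy rfl _).length = 8
      erw [Walk.length_copy]; rw [length_lift, hl]
    refine ⟨?_, hlen⟩
    rw [Walk.isCycle_def]
    refine ⟨?_, ?_, ?_⟩
    · rw [Walk.isTrail_def]
      refine List.Nodup.of_map (Sym2.map gdec) ?_
      show (((lift m t z.1.1 z.1.2 W.2 b).copy rfl _).edges.map (Sym2.map gdec)).Nodup
      erw [Walk.edges_copy]; rw [edges_lift]
      exact hW.isCircuit.isTrail.edges_nodup
    · intro hn
      rw [hn] at hlen
      simp at hlen
    · refine List.Nodup.of_map gdec ?_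
      rw [List.map_tail]
      show ((((lift m t z.1.1 z.1.2 W.2 b).copy rfl _).support.map gdec).tail).Nodup
      erw [Walk.support_copy]; rw [support_lift]
      exact hW.support_nodup

lemma final_count {m t : ℕ} {p q : ℕ} (P : Fin p → Σ x y : V m, (G m).Walk x y)
    (C : Fin q → Σ x : V m, (G m).Walk x x) (h8 : ∀ j, (C j).2.length % 2 = 0)
    (a c : Fin m) (hac : a ≠ c) (u v : Fin t) (i j : Fin 2)
    (hbase : ((∑ i', ((P i').2.2.edges.count s((a, i), (c, j))))
        + ∑ j', ((C j').2.edges.count s((a, i), (c, j)))) = 1) :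
    ((∑ ik : Fin p × K t,
        ((pieceP m t (P ik.1) ik.2).2.2.edges.count s((a, enc u i), (c, enc v j))))
      + ∑ jk : Fin q × K t,
        ((pieceC m t (C jk.1) (h8 jk.1) jk.2).2.edges.count s((a, enc u i), (c, enc v j)))) = 1 := by
  rw [Fintype.sum_prod_type, Fintype.sum_prod_type]
  have hPs : ∀ i' : Fin p,
      (∑ k : K t, (pieceP m t (P i') k).2.2.edges.count s((a, enc u i), (c, enc v j)))
        = (P i').2.2.edges.count s((a, i), (c, j)) := by
    intro i'
    rw [Fintype.sum_sum_type, Fintype.sum_prod_type]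
    have := sum_K (m := m) (t := t) u v hac i j (P i').2.2
    simpa only [pieceP] using this
  have hCs : ∀ j' : Fin q,
      (∑ k : K t, (pieceC m t (C j') (h8 j') k).2.edges.count s((a, enc u i), (c, enc v j)))
        = (C j').2.edges.count s((a, i), (c, j)) := by
    intro j'
    rw [Fintype.sum_sum_type, Fintype.sum_prod_type]
    have := sum_K (m := m) (t := t) u v hac i j (C j').2
    simpa only [pieceC, Walk.edges_copy] using this
  rw [Finset.sum_congr rfl (fun x _ => hPs x), Finset.sum_congr rfl (fun x _ => hCs x)]
  exact hbase

end Aux13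

set_option maxHeartbeats 2000000 in
open Aux13 in
theorem stmt_13 (m : ℕ) (p q : ℕ)
    (h : IsDecomp8 (wreathProd (completeGraph (Fin m)) (⊥ : SimpleGraph (Fin 2))) 1 p q) :
    ∀ t : ℕ, 1 ≤ t → ∃ p' q' : ℕ,
      IsDecomp8 (wreathProd (completeGraph (Fin m)) (⊥ : SimpleGraph (Fin (2 * t)))) 1 p' q' := by
  intro t _
  obtain ⟨P, C, hP, hC, hcnt⟩ := h
  refine ⟨Fintype.card (Fin p × K t), Fintype.card (Fin q × K t), ?_⟩
  have h8 : ∀ j, (C j).2.length % 2 = 0 := fun j => by rw [(hC j).2]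
  set eP := (Fintype.equivFin (Fin p × K t)).symm with heP
  set eC := (Fintype.equivFin (Fin q × K t)).symm with heC
  refine ⟨fun n => pieceP m t (P (eP n).1) (eP n).2,
          fun n => pieceC m t (C (eC n).1) (h8 ((eC n).1)) (eC n).2, ?_, ?_, ?_⟩
  · intro n
    exact pieceP_prop (P (eP n).1) (hP (eP n).1).1 (hP (eP n).1).2 (eP n).2
  · intro n
    exact pieceC_prop (C (eC n).1) (h8 ((eC n).1)) (hC (eC n).1).1 (hC (eC n).1).2 (eC n).2
  · intro e
    induction e using Sym2.ind with
    | _ xz yw =>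
      intro he
      rw [SimpleGraph.mem_edgeSet] at he
      obtain ⟨a, x2⟩ := xz
      obtain ⟨c, y2⟩ := yw
      have hac : a ≠ c := wadj.mp he
      have hx := x2.isLt
      have hy := y2.isLt
      have hxe : x2 = enc (⟨x2.val / 2, by omega⟩ : Fin t) (⟨x2.val % 2, by omega⟩ : Fin 2) :=
        Fin.ext (by show x2.val = 2 * (x2.val / 2) + x2.val % 2; omega)
      have hye : y2 = enc (⟨y2.val / 2, by omega⟩ : Fin t) (⟨y2.val % 2, by omega⟩ : Fin 2) :=
        Fin.ext (by show y2.val = 2 * (y2.val / 2) + y2.val % 2; omega)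
      rw [hxe, hye]
      beta_reduce
      have goalP : (∑ n : Fin (Fintype.card (Fin p × K t)),
            (pieceP m t (P (eP n).1) (eP n).2).2.2.edges.count
              s((a, enc (⟨x2.val / 2, by omega⟩ : Fin t) (⟨x2.val % 2, by omega⟩ : Fin 2)),
                (c, enc (⟨y2.val / 2, by omega⟩ : Fin t) (⟨y2.val % 2, by omega⟩ : Fin 2))))
          = ∑ ik : Fin p × K t,
            (pieceP m t (P ik.1) ik.2).2.2.edges.count
              s((a, enc (⟨x2.val / 2, by omega⟩ : Fin t) (⟨x2.val % 2, by omega⟩ : Fin 2)),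
                (c, enc (⟨y2.val / 2, by omega⟩ : Fin t) (⟨y2.val % 2, by omega⟩ : Fin 2))) :=
        Fintype.sum_equiv eP _ _ (fun _ => rfl)
      have goalC : (∑ n : Fin (Fintype.card (Fin q × K t)),
            (pieceC m t (C (eC n).1) (h8 ((eC n).1)) (eC n).2).2.edges.count
              s((a, enc (⟨x2.val / 2, by omega⟩ : Fin t) (⟨x2.val % 2, by omega⟩ : Fin 2)),
                (c, enc (⟨y2.val / 2, by omega⟩ : Fin t) (⟨y2.val % 2, by omega⟩ : Fin 2))))
          = ∑ jk : Fin q × K t,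
            (pieceC m t (C jk.1) (h8 jk.1) jk.2).2.edges.count
              s((a, enc (⟨x2.val / 2, by omega⟩ : Fin t) (⟨x2.val % 2, by omega⟩ : Fin 2)),
                (c, enc (⟨y2.val / 2, by omega⟩ : Fin t) (⟨y2.val % 2, by omega⟩ : Fin 2))) :=
        Fintype.sum_equiv eC _ _ (fun _ => rfl)
      refine Eq.trans (congrArg₂ (· + ·) goalP goalC) ?_
      exact final_count P C h8 a c hac _ _ _ _
        (hcnt s((a, (⟨x2.val % 2, by omega⟩ : Fin 2)), (c, (⟨y2.val % 2, by omega⟩ : Fin 2)))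
          ((SimpleGraph.mem_edgeSet _).mpr (wadj.mpr hac)))
end

section
/- For every k ≥ 2, the complete bipartite graph K₄ₖ,₄ₖ admits a decomposition into p paths of length 8 and q cycles of length 8 for every admissible pair (p, q) with 8(p+q) = 16k² and p ≠ 1. -/
open SimpleGraph Finset

open SimpleGraph

namespace D8

abbrev V (n : ℕ) := Fin n ⊕ Fin n
abbrev BG (n : ℕ) : SimpleGraph (V n) := completeBipartiteGraph (Fin n) (Fin n)

variable (n : ℕ) [NeZero n]

def L (x : ℕ) : V n := Sum.inl ⟨x % n, Nat.mod_lt _ (Nat.pos_of_ne_zero (NeZero.ne n))⟩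
def R (y : ℕ) : V n := Sum.inr ⟨y % n, Nat.mod_lt _ (Nat.pos_of_ne_zero (NeZero.ne n))⟩

lemma adjLR (x y : ℕ) : (BG n).Adj (L n x) (R n y) := Or.inl ⟨rfl, rfl⟩
lemma adjRL (y x : ℕ) : (BG n).Adj (R n y) (L n x) := Or.inr ⟨rfl, rfl⟩

def pw (y0 x0 y1 x1 y2 x2 y3 x3 y4 : ℕ) : (BG n).Walk (R n y0) (R n y4) :=
  .cons (adjRL n y0 x0) (.cons (adjLR n x0 y1) (.cons (adjRL n y1 x1)
    (.cons (adjLR n x1 y2) (.cons (adjRL n y2 x2) (.cons (adjLR n x2 y3)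
      (.cons (adjRL n y3 x3) (.cons (adjLR n x3 y4) .nil)))))))

def cw (x0 y0 x1 y1 x2 y2 x3 y3 : ℕ) : (BG n).Walk (L n x0) (L n x0) :=
  .cons (adjLR n x0 y0) (.cons (adjRL n y0 x1) (.cons (adjLR n x1 y1)
    (.cons (adjRL n y1 x2) (.cons (adjLR n x2 y2) (.cons (adjRL n y2 x3)
      (.cons (adjLR n x3 y3) (.cons (adjRL n y3 x0) .nil)))))))

@[simp] lemma pw_length (y0 x0 y1 x1 y2 x2 y3 x3 y4 : ℕ) :
    (pw n y0 x0 y1 x1 y2 x2 y3 x3 y4).length = 8 := rfl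

@[simp] lemma cw_length (x0 y0 x1 y1 x2 y2 x3 y3 : ℕ) :
    (cw n x0 y0 x1 y1 x2 y2 x3 y3).length = 8 := rfl

lemma pw_edges (y0 x0 y1 x1 y2 x2 y3 x3 y4 : ℕ) :
    (pw n y0 x0 y1 x1 y2 x2 y3 x3 y4).edges =
      [s(R n y0, L n x0), s(L n x0, R n y1), s(R n y1, L n x1), s(L n x1, R n y2),
       s(R n y2, L n x2), s(L n x2, R n y3), s(R n y3, L n x3), s(L n x3, R n y4)] := rfl

lemma cw_edges (x0 y0 x1 y1 x2 y2 x3 y3 : ℕ) :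
    (cw n x0 y0 x1 y1 x2 y2 x3 y3).edges =
      [s(L n x0, R n y0), s(R n y0, L n x1), s(L n x1, R n y1), s(R n y1, L n x2),
       s(L n x2, R n y2), s(R n y2, L n x3), s(L n x3, R n y3), s(R n y3, L n x0)] := rfl

lemma pw_support (y0 x0 y1 x1 y2 x2 y3 x3 y4 : ℕ) :
    (pw n y0 x0 y1 x1 y2 x2 y3 x3 y4).support =
      [R n y0, L n x0, R n y1, L n x1, R n y2, L n x2, R n y3, L n x3, R n y4] := rfl

lemma cw_support (x0 y0 x1 y1 x2 y2 x3 y3 : ℕ) :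
    (cw n x0 y0 x1 y1 x2 y2 x3 y3).support =
      [L n x0, R n y0, L n x1, R n y1, L n x2, R n y2, L n x3, R n y3, L n x0] := rfl

lemma sswap (x y : ℕ) : s(R n y, L n x) = s(L n x, R n y) := Sym2.eq_swap

lemma L_ne {x y : ℕ} (h : x ≠ y) (hx : x < n) (hy : y < n) : L n x ≠ L n y := by
  simp only [L, ne_eq, Sum.inl.injEq, Fin.mk.injEq, Nat.mod_eq_of_lt hx, Nat.mod_eq_of_lt hy]
  exact h

lemma R_ne {x y : ℕ} (h : x ≠ y) (hx : x < n) (hy : y < n) : R n x ≠ R n y := by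
  simp only [R, ne_eq, Sum.inr.injEq, Fin.mk.injEq, Nat.mod_eq_of_lt hx, Nat.mod_eq_of_lt hy]
  exact h

lemma L_ne_R (x y : ℕ) : L n x ≠ R n y := by simp [L, R]
lemma R_ne_L (x y : ℕ) : R n x ≠ L n y := by simp [L, R]

lemma edge_ne {a b c d : ℕ} (ha : a < n) (hb : b < n) (hc : c < n) (hd : d < n)
    (h : a ≠ c ∨ b ≠ d) : s(L n a, R n b) ≠ s(L n c, R n d) := by
  rw [ne_eq, Sym2.eq_iff]
  rintro (⟨h1, h2⟩ | ⟨h1, h2⟩)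
  · rcases h with h | h
    · exact L_ne n h ha hc h1
    · exact R_ne n h hb hd h2
  · exact L_ne_R n a d h1

lemma nodup8 {α : Type*} {a0 a1 a2 a3 a4 a5 a6 a7 : α}
    (h01 : a0 ≠ a1) (h02 : a0 ≠ a2) (h03 : a0 ≠ a3) (h04 : a0 ≠ a4) (h05 : a0 ≠ a5) (h06 : a0 ≠ a6) (h07 : a0 ≠ a7) (h12 : a1 ≠ a2) (h13 : a1 ≠ a3) (h14 : a1 ≠ a4) (h15 : a1 ≠ a5) (h16 : a1 ≠ a6) (h17 : a1 ≠ a7) (h23 : a2 ≠ a3) (h24 : a2 ≠ a4) (h25 : a2 ≠ a5) (h26 : a2 ≠ a6) (h27 : a2 ≠ a7) (h34 : a3 ≠ a4) (h35 : a3 ≠ a5) (h36 : a3 ≠ a6) (h37 : a3 ≠ a7) (h45 : a4 ≠ a5) (h46 : a4 ≠ a6) (h47 : a4 ≠ a7) (h56 : a5 ≠ a6) (h57 : a5 ≠ a7) (h67 : a6 ≠ a7) :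
    List.Nodup [a0, a1, a2, a3, a4, a5, a6, a7] := by
  simp only [List.nodup_cons, List.mem_cons, List.not_mem_nil, List.nodup_nil, and_true, or_false, not_or]
  exact ⟨⟨h01, h02, h03, h04, h05, h06, h07⟩, ⟨h12, h13, h14, h15, h16, h17⟩, ⟨h23, h24, h25, h26, h27⟩, ⟨h34, h35, h36, h37⟩, ⟨h45, h46, h47⟩, ⟨h56, h57⟩, h67, not_false⟩

lemma nodup9 {α : Type*} {a0 a1 a2 a3 a4 a5 a6 a7 a8 : α}
    (h01 : a0 ≠ a1) (h02 : a0 ≠ a2) (h03 : a0 ≠ a3) (h04 : a0 ≠ a4) (h05 : a0 ≠ a5) (h06 : a0 ≠ a6) (h07 : a0 ≠ a7) (h08 : a0 ≠ a8) (h12 : a1 ≠ a2) (h13 : a1 ≠ a3) (h14 : a1 ≠ a4) (h15 : a1 ≠ a5) (h16 : a1 ≠ a6) (h17 : a1 ≠ a7) (h18 : a1 ≠ a8) (h23 : a2 ≠ a3) (h24 : a2 ≠ a4) (h25 : a2 ≠ a5) (h26 : a2 ≠ a6) (h27 : a2 ≠ a7) (h28 : a2 ≠ a8) (h34 : a3 ≠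 a4) (h35 : a3 ≠ a5) (h36 : a3 ≠ a6) (h37 : a3 ≠ a7) (h38 : a3 ≠ a8) (h45 : a4 ≠ a5) (h46 : a4 ≠ a6) (h47 : a4 ≠ a7) (h48 : a4 ≠ a8) (h56 : a5 ≠ a6) (h57 : a5 ≠ a7) (h58 : a5 ≠ a8) (h67 : a6 ≠ a7) (h68 : a6 ≠ a8) (h78 : a7 ≠ a8) :
    List.Nodup [a0, a1, a2, a3, a4, a5, a6, a7, a8] := by
  simp only [List.nodup_cons, List.mem_cons, List.not_mem_nil, List.nodup_nil, and_true, or_false, not_or]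
  exact ⟨⟨h01, h02, h03, h04, h05, h06, h07, h08⟩, ⟨h12, h13, h14, h15, h16, h17, h18⟩, ⟨h23, h24, h25, h26, h27, h28⟩, ⟨h34, h35, h36, h37, h38⟩, ⟨h45, h46, h47, h48⟩, ⟨h56, h57, h58⟩, ⟨h67, h68⟩, h78, not_false⟩

lemma pw_isPath {y0 x0 y1 x1 y2 x2 y3 x3 y4 : ℕ}
    (h : x0 < n ∧ x1 < n ∧ x2 < n ∧ x3 < n ∧ y0 < n ∧ y1 < n ∧ y2 < n ∧ y3 < n ∧ y4 < n ∧ x0 ≠ x1 ∧ x0 ≠ x2 ∧ x0 ≠ x3 ∧ x1 ≠ x2 ∧ x1 ≠ x3 ∧ x2 ≠ x3 ∧ y0 ≠ y1 ∧ y0 ≠ y2 ∧ y0 ≠ y3 ∧ y0 ≠ y4 ∧ y1 ≠ y2 ∧ y1 ≠ y3 ∧ y1 ≠ y4 ∧ y2 ≠ y3 ∧ y2 ≠ y4 ∧ y3 ≠ y4) :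
    (pw n y0 x0 y1 x1 y2 x2 y3 x3 y4).IsPath := by
  obtain ⟨bx0, bx1, bx2, bx3, by0, by1, by2, by3, by4, hx01, hx02, hx03, hx12, hx13, hx23, hy01, hy02, hy03, hy04, hy12, hy13, hy14, hy23, hy24, hy34⟩ := h
  rw [SimpleGraph.Walk.isPath_def, pw_support]
  exact nodup9 (R_ne_L n _ _) (R_ne n hy01 by0 by1) (R_ne_L n _ _) (R_ne n hy02 by0 by2) (R_ne_L n _ _) (R_ne n hy03 by0 by3) (R_ne_L n _ _) (R_ne n hy04 by0 by4) (L_ne_R n _ _) (L_ne n hx01 bx0 bx1) (L_ne_R n _ _) (L_ne n hx02 bx0 bx2) (L_ne_R n _ _) (L_ne n hx03 bx0 bx3) (L_ne_R n _ _) (R_ne_L n _ _) (R_ne n hy12 by1 by2) (R_ne_L n _ _) (R_ne n hy13 by1 by3) (R_ne_L n _ _) (R_ne n hy14 by1 by4) (L_ne_R n _ _) (L_ne n hx12 bx1 bx2) (L_ne_R n _ _) (L_ne n hx13 bx1 bx3) (L_ne_R n _ _) (R_ne_L n _ _) (R_ne n hy23 by2 by3) (R_ne_L n _ _) (R_ne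 n hy24 by2 by4) (L_ne_R n _ _) (L_ne n hx23 bx2 bx3) (L_ne_R n _ _) (R_ne_L n _ _) (R_ne n hy34 by3 by4) (L_ne_R n _ _)

lemma cw_isCycle {x0 y0 x1 y1 x2 y2 x3 y3 : ℕ}
    (h : x0 < n ∧ x1 < n ∧ x2 < n ∧ x3 < n ∧ y0 < n ∧ y1 < n ∧ y2 < n ∧ y3 < n ∧ x0 ≠ x1 ∧ x0 ≠ x2 ∧ x0 ≠ x3 ∧ x1 ≠ x2 ∧ x1 ≠ x3 ∧ x2 ≠ x3 ∧ y0 ≠ y1 ∧ y0 ≠ y2 ∧ y0 ≠ y3 ∧ y1 ≠ y2 ∧ y1 ≠ y3 ∧ y2 ≠ y3) :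
    (cw n x0 y0 x1 y1 x2 y2 x3 y3).IsCycle := by
  obtain ⟨bx0, bx1, bx2, bx3, by0, by1, by2, by3, hx01, hx02, hx03, hx12, hx13, hx23, hy01, hy02, hy03, hy12, hy13, hy23⟩ := h
  rw [SimpleGraph.Walk.isCycle_def]
  refine ⟨?_, by simp [cw], ?_⟩
  · rw [SimpleGraph.Walk.isTrail_def, cw_edges]
    simp only [sswap]
    exact nodup8 (edge_ne n bx0 by0 bx1 by0 (Or.inl (hx01))) (edge_ne n bx0 by0 bx1 by1 (Or.inl (hx01))) (edge_ne n bx0 by0 bx2 by1 (Or.inl (hx02))) (edge_ne n bx0 by0 bx2 by2 (Or.inl (hx02))) (edge_ne n bx0 by0 bx3 by2 (Or.inl (hx03))) (edge_ne n bx0 by0 bx3 by3 (Or.inl (hx03))) (edge_ne n bx0 by0 bx0 by3 (Or.inr (hy03))) (edge_ne n bx1 by0 bx1 by1 (Or.inr (hy01))) (edge_ne n bx1 by0 bx2 by1 (Or.inl (hx12))) (edge_ne n bx1 by0 bx2 by2 (Or.inl (hx12))) (edge_ne n bx1 by0 bx3 by2 (Or.inl (hx13))) (edge_ne n bx1 by0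 bx3 by3 (Or.inl (hx13))) (edge_ne n bx1 by0 bx0 by3 (Or.inl (hx01.symm))) (edge_ne n bx1 by1 bx2 by1 (Or.inl (hx12))) (edge_ne n bx1 by1 bx2 by2 (Or.inl (hx12))) (edge_ne n bx1 by1 bx3 by2 (Or.inl (hx13))) (edge_ne n bx1 by1 bx3 by3 (Or.inl (hx13))) (edge_ne n bx1 by1 bx0 by3 (Or.inl (hx01.symm))) (edge_ne n bx2 by1 bx2 by2 (Or.inr (hy12))) (edge_ne n bx2 by1 bx3 by2 (Or.inl (hx23))) (edge_ne n bx2 by1 bx3 by3 (Or.inl (hx23))) (edge_ne n bx2 by1 bx0 by3 (Or.inl (hx02.symm))) (edge_ne n bx2 by2 bx3 by2 (Or.inl (hx23))) (edge_ne n bx2 by2 bx3 by3 (Or.inl (hx23))) (edge_ne n bx2 by2 bx0 by3 (Or.inl (hx02.symm))) (edge_ne n bx3 by2 bx3 by3 (Or.inr (hy23))) (edge_ne n bx3 by2 bx0 by3 (Or.inl (hx03.symm))) (edge_ne n bx3 by3 bx0 by3 (Or.inl (hx03.symm)))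
  · rw [cw_support]
    simp only [List.tail_cons]
    exact nodup8 (R_ne_L n _ _) (R_ne n hy01 by0 by1) (R_ne_L n _ _) (R_ne n hy02 by0 by2) (R_ne_L n _ _) (R_ne n hy03 by0 by3) (R_ne_L n _ _) (L_ne_R n _ _) ((L_ne n hx12 bx1 bx2)) (L_ne_R n _ _) ((L_ne n hx13 bx1 bx3)) (L_ne_R n _ _) ((L_ne n hx01 bx0 bx1).symm) (R_ne_L n _ _) (R_ne n hy12 by1 by2) (R_ne_L n _ _) (R_ne n hy13 by1 by3) (R_ne_L n _ _) (L_ne_R n _ _) ((L_ne n hx23 bx2 bx3)) (L_ne_R n _ _) ((L_ne n hx02 bx0 bx2).symm) (R_ne_L n _ _) (R_ne n hy23 by2 by3) (R_ne_L n _ _) (L_ne_R n _ _) ((L_ne n hx03 bx0 bx3).symm) (R_ne_L n _ _)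



def PJ (l : List (Σ u v : V n, (BG n).Walk u v)) : List (Sym2 (V n)) :=
  (l.map fun x => x.2.2.edges).flatten

def CJ (l : List (Σ u : V n, (BG n).Walk u u)) : List (Sym2 (V n)) :=
  (l.map fun x => x.2.edges).flatten

def embF (i o : ℕ) : ℕ × ℕ → Sym2 (V n) := fun st => s(L n (4*i+st.1), R n (o+st.2))


def P8_0 (i o : ℕ) : List (Σ u v : V n, (BG n).Walk u v) := []
def C8_0 (i o : ℕ) : List (Σ u : V n, (BG n).Walk u u) := [⟨L n (4*i+0), cw n (4*i+0) (o+0) (4*i+1) (o+1) (4*i+2) (o+2) (4*i+3) (o+3)⟩, ⟨L n (4*i+0), cw n (4*i+0) (o+1) (4*i+3) (o+0) (4*i+2) (o+3) (4*i+1) (o+2)⟩, ⟨L n (4*i+0), cw n (4*i+0) (o+4) (4*i+1) (o+5) (4*i+2) (o+6) (4*i+3) (o+7)⟩, ⟨L n (4*i+0), cw n (4*i+0) (o+5) (4*i+3) (o+4) (4*i+2) (o+7) (4*i+1) (o+6)⟩]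
def PAIRS8_0 : List (ℕ × ℕ) := [(0, 0), (1, 0), (1, 1), (2, 1), (2, 2), (3, 2), (3, 3), (0, 3), (0, 1), (3, 1), (3, 0), (2, 0), (2, 3), (1, 3), (1, 2), (0, 2), (0, 4), (1, 4), (1, 5), (2, 5), (2, 6), (3, 6), (3, 7), (0, 7), (0, 5), (3, 5), (3, 4), (2, 4), (2, 7), (1, 7), (1, 6), (0, 6)]
lemma edges8_0 (i o : ℕ) :
    PJ n (P8_0 n i o) ++ CJ n (C8_0 n i o) = PAIRS8_0.map (embF n i o) := by
  simp only [P8_0, C8_0, PAIRS8_0, PJ, CJ, List.map_cons, List.map_nil, List.flatten_cons,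
    List.flatten_nil, pw_edges, cw_edges, sswap, embF, List.append_nil, List.nil_append,
    List.cons_append, List.append_assoc]


def P8_2 (i o : ℕ) : List (Σ u v : V n, (BG n).Walk u v) := [⟨R n (o+3), R n (o+7), pw n (o+3) (4*i+3) (o+2) (4*i+2) (o+1) (4*i+1) (o+0) (4*i+0) (o+7)⟩, ⟨R n (o+7), R n (o+3), pw n (o+7) (4*i+3) (o+6) (4*i+2) (o+5) (4*i+1) (o+4) (4*i+0) (o+3)⟩]
def C8_2 (i o : ℕ) : List (Σ u : V n, (BG n).Walk u u) := [⟨L n (4*i+0), cw n (4*i+0) (o+1) (4*i+3) (o+0) (4*i+2) (o+3) (4*i+1) (o+2)⟩, ⟨L n (4*i+0), cw n (4*i+0) (o+5) (4*i+3) (o+4) (4*i+2) (o+7) (4*i+1) (o+6)⟩]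
def PAIRS8_2 : List (ℕ × ℕ) := [(3, 3), (3, 2), (2, 2), (2, 1), (1, 1), (1, 0), (0, 0), (0, 7), (3, 7), (3, 6), (2, 6), (2, 5), (1, 5), (1, 4), (0, 4), (0, 3), (0, 1), (3, 1), (3, 0), (2, 0), (2, 3), (1, 3), (1, 2), (0, 2), (0, 5), (3, 5), (3, 4), (2, 4), (2, 7), (1, 7), (1, 6), (0, 6)]
lemma edges8_2 (i o : ℕ) :
    PJ n (P8_2 n i o) ++ CJ n (C8_2 n i o) = PAIRS8_2.map (embF n i o) := by
  simp only [P8_2, C8_2, PAIRS8_2, PJ, CJ, List.map_cons, List.map_nil, List.flatten_cons,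
    List.flatten_nil, pw_edges, cw_edges, sswap, embF, List.append_nil, List.nil_append,
    List.cons_append, List.append_assoc]


def P8_3 (i o : ℕ) : List (Σ u v : V n, (BG n).Walk u v) := [⟨R n (o+0), R n (o+4), pw n (o+0) (4*i+0) (o+1) (4*i+1) (o+2) (4*i+2) (o+3) (4*i+3) (o+4)⟩, ⟨R n (o+2), R n (o+0), pw n (o+2) (4*i+0) (o+3) (4*i+1) (o+4) (4*i+2) (o+1) (4*i+3) (o+0)⟩, ⟨R n (o+4), R n (o+2), pw n (o+4) (4*i+0) (o+5) (4*i+1) (o+6) (4*i+2) (o+7) (4*i+3) (o+2)⟩]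
def C8_3 (i o : ℕ) : List (Σ u : V n, (BG n).Walk u u) := [⟨L n (4*i+0), cw n (4*i+0) (o+7) (4*i+1) (o+0) (4*i+2) (o+5) (4*i+3) (o+6)⟩]
def PAIRS8_3 : List (ℕ × ℕ) := [(0, 0), (0, 1), (1, 1), (1, 2), (2, 2), (2, 3), (3, 3), (3, 4), (0, 2), (0, 3), (1, 3), (1, 4), (2, 4), (2, 1), (3, 1), (3, 0), (0, 4), (0, 5), (1, 5), (1, 6), (2, 6), (2, 7), (3, 7), (3, 2), (0, 7), (1, 7), (1, 0), (2, 0), (2, 5), (3, 5), (3, 6), (0, 6)]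
lemma edges8_3 (i o : ℕ) :
    PJ n (P8_3 n i o) ++ CJ n (C8_3 n i o) = PAIRS8_3.map (embF n i o) := by
  simp only [P8_3, C8_3, PAIRS8_3, PJ, CJ, List.map_cons, List.map_nil, List.flatten_cons,
    List.flatten_nil, pw_edges, cw_edges, sswap, embF, List.append_nil, List.nil_append,
    List.cons_append, List.append_assoc]


def P8_4 (i o : ℕ) : List (Σ u v : V n, (BG n).Walk u v) := [⟨R n (o+0), R n (o+4), pw n (o+0) (4*i+0) (o+1) (4*i+1) (o+2) (4*i+2) (o+3) (4*i+3) (o+4)⟩, ⟨R n (o+2), R n (o+5), pw n (o+2) (4*i+0) (o+3) (4*i+1) (o+0) (4*i+2) (o+1) (4*i+3) (o+5)⟩, ⟨R n (o+4), R n (o+0), pw n (o+4) (4*i+0) (o+5) (4*i+1) (o+6) (4*i+2) (o+7) (4*i+3) (o+0)⟩, ⟨R n (o+5), R n (o+2), pw n (o+5) (4*i+2) (o+4) (4*i+1) (o+7) (4*i+0) (o+6) (4*i+3) (o+2)⟩]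
def C8_4 (i o : ℕ) : List (Σ u : V n, (BG n).Walk u u) := []
def PAIRS8_4 : List (ℕ × ℕ) := [(0, 0), (0, 1), (1, 1), (1, 2), (2, 2), (2, 3), (3, 3), (3, 4), (0, 2), (0, 3), (1, 3), (1, 0), (2, 0), (2, 1), (3, 1), (3, 5), (0, 4), (0, 5), (1, 5), (1, 6), (2, 6), (2, 7), (3, 7), (3, 0), (2, 5), (2, 4), (1, 4), (1, 7), (0, 7), (0, 6), (3, 6), (3, 2)]
lemma edges8_4 (i o : ℕ) :
    PJ n (P8_4 n i o) ++ CJ n (C8_4 n i o) = PAIRS8_4.map (embF n i o) := by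
  simp only [P8_4, C8_4, PAIRS8_4, PJ, CJ, List.map_cons, List.map_nil, List.flatten_cons,
    List.flatten_nil, pw_edges, cw_edges, sswap, embF, List.append_nil, List.nil_append,
    List.cons_append, List.append_assoc]


def P12_0 (i o : ℕ) : List (Σ u v : V n, (BG n).Walk u v) := []
def C12_0 (i o : ℕ) : List (Σ u : V n, (BG n).Walk u u) := [⟨L n (4*i+0), cw n (4*i+0) (o+0) (4*i+1) (o+1) (4*i+2) (o+2) (4*i+3) (o+3)⟩, ⟨L n (4*i+0), cw n (4*i+0) (o+1) (4*i+3) (o+0) (4*i+2) (o+3) (4*i+1) (o+2)⟩, ⟨L n (4*i+0), cw n (4*i+0) (o+4) (4*i+1) (o+5) (4*i+2) (o+6) (4*i+3) (o+7)⟩, ⟨L n (4*i+0), cw n (4*i+0) (o+5) (4*i+3) (o+4) (4*i+2) (o+7) (4*i+1) (o+6)⟩, ⟨L n (4*i+0), cw n (4*i+0) (o+8) (4*i+1) (o+9) (4*i+2) (o+10) (4*i+3) (o+11)⟩, ⟨L n (4*i+0), cw n (4*i+0) (o+9) (4*i+3) (o+8) (4*i+2) (o+11) (4*i+1) (o+1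0)⟩]
def PAIRS12_0 : List (ℕ × ℕ) := [(0, 0), (1, 0), (1, 1), (2, 1), (2, 2), (3, 2), (3, 3), (0, 3), (0, 1), (3, 1), (3, 0), (2, 0), (2, 3), (1, 3), (1, 2), (0, 2), (0, 4), (1, 4), (1, 5), (2, 5), (2, 6), (3, 6), (3, 7), (0, 7), (0, 5), (3, 5), (3, 4), (2, 4), (2, 7), (1, 7), (1, 6), (0, 6), (0, 8), (1, 8), (1, 9), (2, 9), (2, 10), (3, 10), (3, 11), (0, 11), (0, 9), (3, 9), (3, 8), (2, 8), (2, 11), (1, 11), (1, 10), (0, 10)]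
lemma edges12_0 (i o : ℕ) :
    PJ n (P12_0 n i o) ++ CJ n (C12_0 n i o) = PAIRS12_0.map (embF n i o) := by
  simp only [P12_0, C12_0, PAIRS12_0, PJ, CJ, List.map_cons, List.map_nil, List.flatten_cons,
    List.flatten_nil, pw_edges, cw_edges, sswap, embF, List.append_nil, List.nil_append,
    List.cons_append, List.append_assoc]


def P12_2 (i o : ℕ) : List (Σ u v : V n, (BG n).Walk u v) := [⟨R n (o+3), R n (o+7), pw n (o+3) (4*i+3) (o+2) (4*i+2) (o+1) (4*i+1) (o+0) (4*i+0) (o+7)⟩, ⟨R n (o+7), R n (o+3), pw n (o+7) (4*i+3) (o+6) (4*i+2) (o+5) (4*i+1) (o+4) (4*i+0) (o+3)⟩]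
def C12_2 (i o : ℕ) : List (Σ u : V n, (BG n).Walk u u) := [⟨L n (4*i+0), cw n (4*i+0) (o+1) (4*i+3) (o+0) (4*i+2) (o+3) (4*i+1) (o+2)⟩, ⟨L n (4*i+0), cw n (4*i+0) (o+5) (4*i+3) (o+4) (4*i+2) (o+7) (4*i+1) (o+6)⟩, ⟨L n (4*i+0), cw n (4*i+0) (o+8) (4*i+1) (o+9) (4*i+2) (o+10) (4*i+3) (o+11)⟩, ⟨L n (4*i+0), cw n (4*i+0) (o+9) (4*i+3) (o+8) (4*i+2) (o+11) (4*i+1) (o+10)⟩]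
def PAIRS12_2 : List (ℕ × ℕ) := [(3, 3), (3, 2), (2, 2), (2, 1), (1, 1), (1, 0), (0, 0), (0, 7), (3, 7), (3, 6), (2, 6), (2, 5), (1, 5), (1, 4), (0, 4), (0, 3), (0, 1), (3, 1), (3, 0), (2, 0), (2, 3), (1, 3), (1, 2), (0, 2), (0, 5), (3, 5), (3, 4), (2, 4), (2, 7), (1, 7), (1, 6), (0, 6), (0, 8), (1, 8), (1, 9), (2, 9), (2, 10), (3, 10), (3, 11), (0, 11), (0, 9), (3, 9), (3, 8), (2, 8), (2, 11), (1, 11), (1, 10), (0, 10)]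
lemma edges12_2 (i o : ℕ) :
    PJ n (P12_2 n i o) ++ CJ n (C12_2 n i o) = PAIRS12_2.map (embF n i o) := by
  simp only [P12_2, C12_2, PAIRS12_2, PJ, CJ, List.map_cons, List.map_nil, List.flatten_cons,
    List.flatten_nil, pw_edges, cw_edges, sswap, embF, List.append_nil, List.nil_append,
    List.cons_append, List.append_assoc]


def P12_3 (i o : ℕ) : List (Σ u v : V n, (BG n).Walk u v) := [⟨R n (o+0), R n (o+4), pw n (o+0) (4*i+0) (o+1) (4*i+1) (o+2) (4*i+2) (o+3) (4*i+3) (o+4)⟩, ⟨R n (o+2), R n (o+0), pw n (o+2) (4*i+0) (o+3) (4*i+1) (o+4) (4*i+2) (o+1) (4*i+3) (o+0)⟩, ⟨R n (o+4), R n (o+2), pw n (o+4) (4*i+0) (o+5) (4*i+1) (o+6) (4*i+2) (o+7) (4*i+3) (o+2)⟩]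
def C12_3 (i o : ℕ) : List (Σ u : V n, (BG n).Walk u u) := [⟨L n (4*i+0), cw n (4*i+0) (o+7) (4*i+1) (o+0) (4*i+2) (o+5) (4*i+3) (o+6)⟩, ⟨L n (4*i+0), cw n (4*i+0) (o+8) (4*i+1) (o+9) (4*i+2) (o+10) (4*i+3) (o+11)⟩, ⟨L n (4*i+0), cw n (4*i+0) (o+9) (4*i+3) (o+8) (4*i+2) (o+11) (4*i+1) (o+10)⟩]
def PAIRS12_3 : List (ℕ × ℕ) := [(0, 0), (0, 1), (1, 1), (1, 2), (2, 2), (2, 3), (3, 3), (3, 4), (0, 2), (0, 3), (1, 3), (1, 4), (2, 4), (2, 1), (3, 1), (3, 0), (0, 4), (0, 5), (1, 5), (1, 6), (2, 6), (2, 7), (3, 7), (3, 2), (0, 7), (1, 7), (1, 0), (2, 0), (2, 5), (3, 5), (3, 6), (0, 6), (0, 8), (1, 8), (1, 9), (2, 9), (2, 10), (3, 10), (3, 11), (0, 11), (0, 9), (3, 9), (3, 8), (2, 8), (2, 11), (1, 11), (1, 10), (0, 10)]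
lemma edges12_3 (i o : ℕ) :
    PJ n (P12_3 n i o) ++ CJ n (C12_3 n i o) = PAIRS12_3.map (embF n i o) := by
  simp only [P12_3, C12_3, PAIRS12_3, PJ, CJ, List.map_cons, List.map_nil, List.flatten_cons,
    List.flatten_nil, pw_edges, cw_edges, sswap, embF, List.append_nil, List.nil_append,
    List.cons_append, List.append_assoc]


def P12_4 (i o : ℕ) : List (Σ u v : V n, (BG n).Walk u v) := [⟨R n (o+0), R n (o+4), pw n (o+0) (4*i+0) (o+1) (4*i+1) (o+2) (4*i+2) (o+3) (4*i+3) (o+4)⟩, ⟨R n (o+2), R n (o+5), pw n (o+2) (4*i+0) (o+3) (4*i+1) (o+0) (4*i+2) (o+1) (4*i+3) (o+5)⟩, ⟨R n (o+4), R n (o+0), pw n (o+4) (4*i+0) (o+5) (4*i+1) (o+6) (4*i+2) (o+7) (4*i+3) (o+0)⟩, ⟨R n (o+5), R n (o+2), pw n (o+5) (4*i+2) (o+4) (4*i+1) (o+7) (4*i+0) (o+6) (4*i+3) (o+2)⟩]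
def C12_4 (i o : ℕ) : List (Σ u : V n, (BG n).Walk u u) := [⟨L n (4*i+0), cw n (4*i+0) (o+8) (4*i+1) (o+9) (4*i+2) (o+10) (4*i+3) (o+11)⟩, ⟨L n (4*i+0), cw n (4*i+0) (o+9) (4*i+3) (o+8) (4*i+2) (o+11) (4*i+1) (o+10)⟩]
def PAIRS12_4 : List (ℕ × ℕ) := [(0, 0), (0, 1), (1, 1), (1, 2), (2, 2), (2, 3), (3, 3), (3, 4), (0, 2), (0, 3), (1, 3), (1, 0), (2, 0), (2, 1), (3, 1), (3, 5), (0, 4), (0, 5), (1, 5), (1, 6), (2, 6), (2, 7), (3, 7), (3, 0), (2, 5), (2, 4), (1, 4), (1, 7), (0, 7), (0, 6), (3, 6), (3, 2), (0, 8), (1, 8), (1, 9), (2, 9), (2, 10), (3, 10), (3, 11), (0, 11), (0, 9), (3, 9), (3, 8), (2, 8), (2, 11), (1, 11), (1, 10), (0, 10)]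
lemma edges12_4 (i o : ℕ) :
    PJ n (P12_4 n i o) ++ CJ n (C12_4 n i o) = PAIRS12_4.map (embF n i o) := by
  simp only [P12_4, C12_4, PAIRS12_4, PJ, CJ, List.map_cons, List.map_nil, List.flatten_cons,
    List.flatten_nil, pw_edges, cw_edges, sswap, embF, List.append_nil, List.nil_append,
    List.cons_append, List.append_assoc]


def P12_5 (i o : ℕ) : List (Σ u v : V n, (BG n).Walk u v) := [⟨R n (o+0), R n (o+4), pw n (o+0) (4*i+0) (o+1) (4*i+1) (o+2) (4*i+2) (o+3) (4*i+3) (o+4)⟩, ⟨R n (o+2), R n (o+5), pw n (o+2) (4*i+0) (o+3) (4*i+1) (o+0) (4*i+2) (o+1) (4*i+3) (o+5)⟩, ⟨R n (o+4), R n (o+0), pw n (o+4) (4*i+0) (o+5) (4*i+1) (o+6) (4*i+2) (o+7) (4*i+3) (o+0)⟩, ⟨R n (o+6), R n (o+2), pw n (o+6) (4*i+0) (o+7) (4*i+1) (o+4) (4*i+2) (o+8) (4*i+3) (o+2)⟩, ⟨R n (o+5), R n (o+6), pw n (o+5) (4*i+2) (o+9) (4*i+0) (o+10) (4*i+1) (o+11)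 (4*i+3) (o+6)⟩]
def C12_5 (i o : ℕ) : List (Σ u : V n, (BG n).Walk u u) := [⟨L n (4*i+0), cw n (4*i+0) (o+8) (4*i+1) (o+9) (4*i+3) (o+10) (4*i+2) (o+11)⟩]
def PAIRS12_5 : List (ℕ × ℕ) := [(0, 0), (0, 1), (1, 1), (1, 2), (2, 2), (2, 3), (3, 3), (3, 4), (0, 2), (0, 3), (1, 3), (1, 0), (2, 0), (2, 1), (3, 1), (3, 5), (0, 4), (0, 5), (1, 5), (1, 6), (2, 6), (2, 7), (3, 7), (3, 0), (0, 6), (0, 7), (1, 7), (1, 4), (2, 4), (2, 8), (3, 8), (3, 2), (2, 5), (2, 9), (0, 9), (0, 10), (1, 10), (1, 11), (3, 11), (3, 6), (0, 8), (1, 8), (1, 9), (3, 9), (3, 10), (2, 10), (2, 11), (0, 11)]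
lemma edges12_5 (i o : ℕ) :
    PJ n (P12_5 n i o) ++ CJ n (C12_5 n i o) = PAIRS12_5.map (embF n i o) := by
  simp only [P12_5, C12_5, PAIRS12_5, PJ, CJ, List.map_cons, List.map_nil, List.flatten_cons,
    List.flatten_nil, pw_edges, cw_edges, sswap, embF, List.append_nil, List.nil_append,
    List.cons_append, List.append_assoc]


def P12_6 (i o : ℕ) : List (Σ u v : V n, (BG n).Walk u v) := [⟨R n (o+0), R n (o+4), pw n (o+0) (4*i+0) (o+1) (4*i+1) (o+2) (4*i+2) (o+3) (4*i+3) (o+4)⟩, ⟨R n (o+2), R n (o+5), pw n (o+2) (4*i+0) (o+3) (4*i+1) (o+0) (4*i+2) (o+1) (4*i+3) (o+5)⟩, ⟨R n (o+4), R n (o+0), pw n (o+4) (4*i+0) (o+5) (4*i+1) (o+6) (4*i+2) (o+7) (4*i+3) (o+0)⟩, ⟨R n (o+6), R n (o+2), pw n (o+6) (4*i+0) (o+7) (4*i+1) (o+4) (4*i+2) (o+8) (4*i+3) (o+2)⟩, ⟨R n (o+8), R n (o+6), pw n (o+8) (4*i+0) (o+9) (4*i+1) (o+10) (4*i+2) (o+11)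 (4*i+3) (o+6)⟩, ⟨R n (o+8), R n (o+5), pw n (o+8) (4*i+1) (o+11) (4*i+0) (o+10) (4*i+3) (o+9) (4*i+2) (o+5)⟩]
def C12_6 (i o : ℕ) : List (Σ u : V n, (BG n).Walk u u) := []
def PAIRS12_6 : List (ℕ × ℕ) := [(0, 0), (0, 1), (1, 1), (1, 2), (2, 2), (2, 3), (3, 3), (3, 4), (0, 2), (0, 3), (1, 3), (1, 0), (2, 0), (2, 1), (3, 1), (3, 5), (0, 4), (0, 5), (1, 5), (1, 6), (2, 6), (2, 7), (3, 7), (3, 0), (0, 6), (0, 7), (1, 7), (1, 4), (2, 4), (2, 8), (3, 8), (3, 2), (0, 8), (0, 9), (1, 9), (1, 10), (2, 10), (2, 11), (3, 11), (3, 6), (1, 8), (1, 11), (0, 11), (0, 10), (3, 10), (3, 9), (2, 9), (2, 5)]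
lemma edges12_6 (i o : ℕ) :
    PJ n (P12_6 n i o) ++ CJ n (C12_6 n i o) = PAIRS12_6.map (embF n i o) := by
  simp only [P12_6, C12_6, PAIRS12_6, PJ, CJ, List.map_cons, List.map_nil, List.flatten_cons,
    List.flatten_nil, pw_edges, cw_edges, sswap, embF, List.append_nil, List.nil_append,
    List.cons_append, List.append_assoc]


def allPairs (w : ℕ) : List (ℕ × ℕ) := (List.range (4*w)).map fun t => (t / w, t % w)

lemma mem_allPairs {w : ℕ} (hw : 0 < w) {st : ℕ × ℕ} :
    st ∈ allPairs w ↔ st.1 < 4 ∧ st.2 < w := by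
  constructor
  · rintro h
    obtain ⟨t, ht, rfl⟩ := List.mem_map.1 h
    rw [List.mem_range] at ht
    exact ⟨Nat.div_lt_of_lt_mul (by omega), Nat.mod_lt _ hw⟩
  · rintro ⟨h1, h2⟩
    refine List.mem_map.2 ⟨w * st.1 + st.2, List.mem_range.2 ?_, ?_⟩
    · calc w * st.1 + st.2 < w * st.1 + w := by omega
        _ = w * (st.1 + 1) := by ring
        _ ≤ w * 4 := Nat.mul_le_mul_left w (by omega)
        _ = 4 * w := by ring
    · have hd : (w * st.1 + st.2) / w = st.1 := by
        rw [Nat.mul_add_div hw, Nat.div_eq_of_lt h2, Nat.add_zero]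
      have hm : (w * st.1 + st.2) % w = st.2 := by
        rw [Nat.mul_add_mod, Nat.mod_eq_of_lt h2]
      ext <;> simp [hd, hm]

lemma nodup_allPairs (w : ℕ) : (allPairs w).Nodup := by
  refine List.Nodup.map_on ?_ List.nodup_range
  intro x _ y _ hxy
  have h1 := congrArg Prod.fst hxy
  have h2 := congrArg Prod.snd hxy
  simp only at h1 h2
  conv_lhs => rw [← Nat.div_add_mod x w]
  conv_rhs => rw [← Nat.div_add_mod y w]
  rw [h1, h2]

lemma L_eq_inl {x : ℕ} {a : Fin n} (hx : x < n) : L n x = Sum.inl a ↔ x = a.val := by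
  simp [L, Fin.ext_iff, Nat.mod_eq_of_lt hx]
lemma R_eq_inr {x : ℕ} {a : Fin n} (hx : x < n) : R n x = Sum.inr a ↔ x = a.val := by
  simp [R, Fin.ext_iff, Nat.mod_eq_of_lt hx]

lemma count_emb {w i o : ℕ} (hw : 0 < w) (hi : 4*i+4 ≤ n) (ho : o+w ≤ n) (a b : Fin n) :
    ((allPairs w).map (embF n i o)).count s(Sum.inl a, Sum.inr b) =
      (if 4*i ≤ a.val ∧ a.val < 4*i+4 ∧ o ≤ b.val ∧ b.val < o+w then 1 else 0) := by
  have hnd : ((allPairs w).map (embF n i o)).Nodup := by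
    refine List.Nodup.map_on ?_ (nodup_allPairs w)
    intro x hx y hy hxy
    rw [mem_allPairs hw] at hx hy
    simp only [embF, Sym2.eq_iff] at hxy
    rcases hxy with ⟨h1, h2⟩ | ⟨h1, h2⟩
    · simp only [L, Sum.inl.injEq, Fin.ext_iff,
        Nat.mod_eq_of_lt (show 4*i+x.1 < n by omega),
        Nat.mod_eq_of_lt (show 4*i+y.1 < n by omega)] at h1
      simp only [R, Sum.inr.injEq, Fin.ext_iff,
        Nat.mod_eq_of_lt (show o+x.2 < n by omega),
        Nat.mod_eq_of_lt (show o+y.2 < n by omega)] at h2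
      ext <;> omega
    · exact absurd h1 (L_ne_R n _ _)
  split_ifs with hcond
  · refine List.count_eq_one_of_mem hnd (List.mem_map.2 ⟨(a.val - 4*i, b.val - o), ?_, ?_⟩)
    · rw [mem_allPairs hw]; constructor <;> simp <;> omega
    · simp only [embF]
      have e1 : L n (4*i + (a.val - 4*i)) = Sum.inl a := by
        simp only [L, Sum.inl.injEq, Fin.ext_iff,
          Nat.mod_eq_of_lt (show 4*i + (a.val - 4*i) < n by omega)]
        omega
      have e2 : R n (o + (b.val - o)) = Sum.inr b := by
        simp only [R, Sum.inr.injEq, Fin.ext_iff,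
          Nat.mod_eq_of_lt (show o + (b.val - o) < n by omega)]
        omega
      rw [e1, e2]
  · refine List.count_eq_zero_of_not_mem ?_
    intro hmem
    obtain ⟨st, hst, heq⟩ := List.mem_map.1 hmem
    rw [mem_allPairs hw] at hst
    simp only [embF, Sym2.eq_iff] at heq
    rcases heq with ⟨h1, h2⟩ | ⟨h1, h2⟩
    · simp only [L, Sum.inl.injEq, Fin.ext_iff,
        Nat.mod_eq_of_lt (show 4*i+st.1 < n by omega)] at h1
      simp only [R, Sum.inr.injEq, Fin.ext_iff,
        Nat.mod_eq_of_lt (show o+st.2 < n by omega)] at h2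
      omega
    · simp [L] at h1

def Wd : Bool → ℕ
  | true => 12
  | false => 8
def capW : Bool → ℕ
  | true => 6
  | false => 4

def UP (tw : Bool) (c i o : ℕ) : List (Σ u v : V n, (BG n).Walk u v) :=
  if tw then
    if c = 0 then P12_0 n i o else if c = 2 then P12_2 n i o else if c = 3 then P12_3 n i o
    else if c = 4 then P12_4 n i o else if c = 5 then P12_5 n i o
    else if c = 6 then P12_6 n i o else []
  else
    if c = 0 then P8_0 n i o else if c = 2 then P8_2 n i o else if c = 3 then P8_3 n i o
    else if c = 4 then P8_4 n i o else []

def UC (tw : Bool) (c i o : ℕ) : List (Σ u : V n, (BG n).Walk u u) :=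
  if tw then
    if c = 0 then C12_0 n i o else if c = 2 then C12_2 n i o else if c = 3 then C12_3 n i o
    else if c = 4 then C12_4 n i o else if c = 5 then C12_5 n i o
    else if c = 6 then C12_6 n i o else []
  else
    if c = 0 then C8_0 n i o else if c = 2 then C8_2 n i o else if c = 3 then C8_3 n i o
    else if c = 4 then C8_4 n i o else []

lemma UP_length (tw : Bool) (c i o : ℕ) (h : c ≤ capW tw ∧ c ≠ 1) :
    (UP n tw c i o).length = c := by
  obtain ⟨h1, h2⟩ := h
  cases tw <;> simp only [capW, Bool.cond_self, if_true, if_false] at h1 <;> interval_cases c <;>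
    first
      | exact absurd rfl h2
      | simp [UP, P8_0, P8_2, P8_3, P8_4, P12_0, P12_2, P12_3, P12_4, P12_5, P12_6]

lemma UC_length (tw : Bool) (c i o : ℕ) (h : c ≤ capW tw ∧ c ≠ 1) :
    (UC n tw c i o).length = capW tw - c := by
  obtain ⟨h1, h2⟩ := h
  cases tw <;> simp only [capW, if_true, if_false] at h1 ⊢ <;> interval_cases c <;>
    first
      | exact absurd rfl h2
      | simp [UC, C8_0, C8_2, C8_3, C8_4, C12_0, C12_2, C12_3, C12_4, C12_5, C12_6]

lemma UP_mem (tw : Bool) (c i o : ℕ) (h : c ≤ capW tw ∧ c ≠ 1)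
    (hi : 4*i+4 ≤ n) (ho : o + Wd tw ≤ n) :
    ∀ x ∈ UP n tw c i o, x.2.2.IsPath ∧ x.2.2.length = 8 := by
  obtain ⟨h1, h2⟩ := h
  cases tw <;> simp only [capW] at h1 <;> simp only [Wd, if_true, if_false] at ho <;>
    interval_cases c <;>
    first
      | exact absurd rfl h2
      | (intro x hx
         simp only [UP, if_true, if_false, reduceIte] at hx
         fin_cases hx <;> exact ⟨pw_isPath n (by omega), rfl⟩)

lemma UC_mem (tw : Bool) (c i o : ℕ) (h : c ≤ capW tw ∧ c ≠ 1)
    (hi : 4*i+4 ≤ n) (ho : o + Wd tw ≤ n) :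
    ∀ x ∈ UC n tw c i o, x.2.IsCycle ∧ x.2.length = 8 := by
  obtain ⟨h1, h2⟩ := h
  cases tw <;> simp only [capW] at h1 <;> simp only [Wd, if_true, if_false] at ho <;>
    interval_cases c <;>
    first
      | exact absurd rfl h2
      | (intro x hx
         simp only [UC, if_true, if_false, reduceIte] at hx
         fin_cases hx <;> exact ⟨cw_isCycle n (by omega), rfl⟩)

lemma U_count (tw : Bool) (c i o : ℕ) (h : c ≤ capW tw ∧ c ≠ 1)
    (hi : 4*i+4 ≤ n) (ho : o + Wd tw ≤ n) (a b : Fin n) :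
    (PJ n (UP n tw c i o) ++ CJ n (UC n tw c i o)).count s(Sum.inl a, Sum.inr b) =
      (if 4*i ≤ a.val ∧ a.val < 4*i+4 ∧ o ≤ b.val ∧ b.val < o + Wd tw then 1 else 0) := by
  obtain ⟨h1, h2⟩ := h
  cases tw <;> simp only [capW] at h1 <;> simp only [Wd, if_true, if_false] at ho ⊢ <;>
    interval_cases c
  · rw [show UP n false 0 i o = P8_0 n i o from rfl,
        show UC n false 0 i o = C8_0 n i o from rfl, edges8_0,
        List.Perm.count_eq ((by decide : List.Perm PAIRS8_0 (allPairs 8)).map (embF n i o))]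
    exact count_emb n (by norm_num) hi ho a b
  · exact absurd rfl h2
  · rw [show UP n false 2 i o = P8_2 n i o from rfl,
        show UC n false 2 i o = C8_2 n i o from rfl, edges8_2,
        List.Perm.count_eq ((by decide : List.Perm PAIRS8_2 (allPairs 8)).map (embF n i o))]
    exact count_emb n (by norm_num) hi ho a b
  · rw [show UP n false 3 i o = P8_3 n i o from rfl,
        show UC n false 3 i o = C8_3 n i o from rfl, edges8_3,
        List.Perm.count_eq ((by decide : List.Perm PAIRS8_3 (allPairs 8)).map (embF n i o))]
    exact count_emb n (by norm_num) hi ho a b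
  · rw [show UP n false 4 i o = P8_4 n i o from rfl,
        show UC n false 4 i o = C8_4 n i o from rfl, edges8_4,
        List.Perm.count_eq ((by decide : List.Perm PAIRS8_4 (allPairs 8)).map (embF n i o))]
    exact count_emb n (by norm_num) hi ho a b
  · rw [show UP n true 0 i o = P12_0 n i o from rfl,
        show UC n true 0 i o = C12_0 n i o from rfl, edges12_0,
        List.Perm.count_eq ((by decide : List.Perm PAIRS12_0 (allPairs 12)).map (embF n i o))]
    exact count_emb n (by norm_num) hi ho a b
  · exact absurd rfl h2
  · rw [show UP n true 2 i o = P12_2 n i o from rfl,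
        show UC n true 2 i o = C12_2 n i o from rfl, edges12_2,
        List.Perm.count_eq ((by decide : List.Perm PAIRS12_2 (allPairs 12)).map (embF n i o))]
    exact count_emb n (by norm_num) hi ho a b
  · rw [show UP n true 3 i o = P12_3 n i o from rfl,
        show UC n true 3 i o = C12_3 n i o from rfl, edges12_3,
        List.Perm.count_eq ((by decide : List.Perm PAIRS12_3 (allPairs 12)).map (embF n i o))]
    exact count_emb n (by norm_num) hi ho a b
  · rw [show UP n true 4 i o = P12_4 n i o from rfl,
        show UC n true 4 i o = C12_4 n i o from rfl, edges12_4,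
        List.Perm.count_eq ((by decide : List.Perm PAIRS12_4 (allPairs 12)).map (embF n i o))]
    exact count_emb n (by norm_num) hi ho a b
  · rw [show UP n true 5 i o = P12_5 n i o from rfl,
        show UC n true 5 i o = C12_5 n i o from rfl, edges12_5,
        List.Perm.count_eq ((by decide : List.Perm PAIRS12_5 (allPairs 12)).map (embF n i o))]
    exact count_emb n (by norm_num) hi ho a b
  · rw [show UP n true 6 i o = P12_6 n i o from rfl,
        show UC n true 6 i o = C12_6 n i o from rfl, edges12_6,
        List.Perm.count_eq ((by decide : List.Perm PAIRS12_6 (allPairs 12)).map (embF n i o))]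
    exact count_emb n (by norm_num) hi ho a b

def alloc : List ℕ → ℕ → List ℕ
  | [], _ => []
  | c :: cs, p =>
    if c + 2 ≤ p then c :: alloc cs (p - c)
    else if p = c + 1 then (c - 1) :: alloc cs 2
    else p :: alloc cs 0

lemma alloc_length (caps : List ℕ) (p : ℕ) : (alloc caps p).length = caps.length := by
  induction caps generalizing p with
  | nil => rfl
  | cons c cs ih => simp only [alloc]; split_ifs <;> simp [ih]

lemma alloc_sum (caps : List ℕ) (hc : ∀ c ∈ caps, 4 ≤ c) (p : ℕ) (hp : p ≤ caps.sum) :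
    (alloc caps p).sum = p := by
  induction caps generalizing p with
  | nil => simp only [List.sum_nil] at hp; simp [alloc]; omega
  | cons c cs ih =>
    have hc4 : 4 ≤ c := hc c (by simp)
    have hc' : ∀ x ∈ cs, 4 ≤ x := fun x hx => hc x (by simp [hx])
    simp only [List.sum_cons] at hp
    simp only [alloc]
    split_ifs with h1 h2
    · rw [List.sum_cons, ih hc' (p - c) (by omega)]; omega
    · have hcs : 4 ≤ cs.sum := by
        match cs with
        | [] => simp at hp; omega
        | x :: xs =>
          have := hc' x (by simp)
          simp only [List.sum_cons]
          omega
      rw [List.sum_cons, ih hc' 2 (by omega)]; omega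
    · rw [List.sum_cons, ih hc' 0 (by omega)]; omega

lemma alloc_valid (caps : List ℕ) (hc : ∀ c ∈ caps, 4 ≤ c) (p : ℕ) (hp : p ≠ 1) :
    ∀ x ∈ caps.zip (alloc caps p), x.2 ≤ x.1 ∧ x.2 ≠ 1 := by
  induction caps generalizing p with
  | nil => simp
  | cons c cs ih =>
    have hc4 : 4 ≤ c := hc c (by simp)
    have hc' : ∀ x ∈ cs, 4 ≤ x := fun x hx => hc x (by simp [hx])
    simp only [alloc]
    split_ifs with h1 h2
    · rintro x hx
      rcases List.mem_cons.1 hx with rfl | hx'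
      · exact ⟨le_refl c, by omega⟩
      · exact ih hc' (p - c) (by omega) x hx'
    · rintro x hx
      rcases List.mem_cons.1 hx with rfl | hx'
      · exact ⟨by omega, by omega⟩
      · exact ih hc' 2 (by omega) x hx'
    · rintro x hx
      rcases List.mem_cons.1 hx with rfl | hx'
      · exact ⟨by omega, hp⟩
      · exact ih hc' 0 (by omega) x hx'

/- list sum helpers -/
lemma sum_get {α : Type*} (l : List α) (f : α → ℕ) :
    ∑ t : Fin l.length, f (l.get t) = (l.map f).sum := by
  induction l with
  | nil => simp
  | cons x xs ih =>
    simp only [List.length_cons]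
    rw [Fin.sum_univ_succ]
    simp [ih]

lemma sum_flatMapN {α : Type*} (l : List α) (f : α → List ℕ) :
    (l.flatMap f).sum = (l.map (fun a => (f a).sum)).sum := by
  induction l with
  | nil => rfl
  | cons x xs ih => simp [List.flatMap_cons, List.sum_append, ih]

lemma sum_map_add {α : Type*} (l : List α) (f g : α → ℕ) :
    (l.map (fun x => f x + g x)).sum = (l.map f).sum + (l.map g).sum := by
  induction l with
  | nil => rfl
  | cons x xs ih => simp [ih]; omega

lemma sum_map_sub {α : Type*} (l : List α) (f g : α → ℕ) (h : ∀ x ∈ l, g x ≤ f x) :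
    (l.map (fun x => f x - g x)).sum = (l.map f).sum - (l.map g).sum := by
  induction l with
  | nil => rfl
  | cons x xs ih =>
    have h1 := h x (by simp)
    have h2 : ∀ y ∈ xs, g y ≤ f y := fun y hy => h y (by simp [hy])
    have h3 : (xs.map g).sum ≤ (xs.map f).sum := by
      clear ih h h1; induction xs with
      | nil => simp
      | cons z zs ihz =>
        have := h2 z (by simp)
        have := ihz (fun y hy => h2 y (by simp [hy]))
        simp only [List.map_cons, List.sum_cons]
        omega
    simp only [List.map_cons, List.sum_cons, ih h2]
    omega

lemma lrange_sum (N : ℕ) (f : ℕ → ℕ) :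
    ((List.range N).map f).sum = ∑ x ∈ Finset.range N, f x := rfl

/- global structures -/
def mm (k : ℕ) : ℕ := k / 2
def twb (k J : ℕ) : Bool := (k % 2 == 1) && (J == mm k - 1)
def units (k : ℕ) : List (ℕ × ℕ) :=
  (List.range k).flatMap fun i => (List.range (mm k)).map fun J => (i, J)
def capsL (k : ℕ) : List ℕ := (units k).map fun u => capW (twb k u.2)
def zp (k p : ℕ) : List ((ℕ × ℕ) × ℕ) := (units k).zip (alloc (capsL k) p)

lemma twb_iff {k J : ℕ} : twb k J = true ↔ (k % 2 = 1 ∧ J = mm k - 1) := by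
  simp [twb]

lemma capW_ge4 (tw : Bool) : 4 ≤ capW tw := by cases tw <;> simp [capW]

lemma mem_units {k : ℕ} {u : ℕ × ℕ} : u ∈ units k ↔ u.1 < k ∧ u.2 < mm k := by
  constructor
  · intro h
    simp only [units, List.mem_flatMap, List.mem_map, List.mem_range] at h
    obtain ⟨i, hi, J, hJ, rfl⟩ := h
    exact ⟨hi, hJ⟩
  · rintro ⟨h1, h2⟩
    simp only [units, List.mem_flatMap, List.mem_map, List.mem_range]
    exact ⟨u.1, h1, u.2, h2, rfl⟩

lemma caps_ge4 (k : ℕ) : ∀ c ∈ capsL k, 4 ≤ c := by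
  intro c hc
  simp only [capsL, List.mem_map] at hc
  obtain ⟨u, _, rfl⟩ := hc
  exact capW_ge4 _

lemma capW_twb (k J : ℕ) :
    capW (twb k J) = 4 + (if k % 2 = 1 ∧ J = mm k - 1 then 2 else 0) := by
  by_cases h : k % 2 = 1 ∧ J = mm k - 1
  · rw [show twb k J = true from twb_iff.2 h]; simp [capW, h]
  · have : twb k J = false := by
      rw [← Bool.not_eq_true, twb_iff]; exact h
    rw [this]; simp [capW, h]

lemma capsum (k : ℕ) (hk : 2 ≤ k) : (capsL k).sum = 2 * (k * k) := by
  have hm1 : 1 ≤ mm k := by simp only [mm]; omega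
  rw [capsL, units, List.map_flatMap]
  rw [sum_flatMapN]
  have hinner : ∀ i : ℕ,
      (((List.range (mm k)).map fun J => (i, J)).map fun u => capW (twb k u.2)).sum
        = 2 * k := by
    intro i
    rw [List.map_map]
    have : ((fun u : ℕ × ℕ => capW (twb k u.2)) ∘ fun J => (i, J)) =
        fun J => capW (twb k J) := rfl
    rw [this, lrange_sum]
    have : ∀ J ∈ Finset.range (mm k), capW (twb k J) =
        4 + (if J = mm k - 1 then (if k % 2 = 1 then 2 else 0) else 0) := by
      intro J _
      rw [capW_twb]
      by_cases h1 : k % 2 = 1 <;> by_cases h2 : J = mm k - 1 <;> simp [h1, h2]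
    rw [Finset.sum_congr rfl this, Finset.sum_add_distrib, Finset.sum_const,
      Finset.sum_ite_eq' (Finset.range (mm k)) (mm k - 1)]
    simp only [Finset.mem_range, Finset.card_range, smul_eq_mul]
    rw [if_pos (by omega)]
    by_cases h : k % 2 = 1 <;> simp only [mm, h, if_true, if_false] <;> omega
  rw [lrange_sum]
  rw [Finset.sum_congr rfl (fun i _ => hinner i), Finset.sum_const, Finset.card_range,
    smul_eq_mul]
  ring

def pathsL (k p : ℕ) [NeZero (4*k)] : List (Σ u v : V (4*k), (BG (4*k)).Walk u v) :=
  ((zp k p).map fun uc => UP (4*k) (twb k uc.1.2) uc.2 uc.1.1 (8*uc.1.2)).flatten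

def cycsL (k p : ℕ) [NeZero (4*k)] : List (Σ u : V (4*k), (BG (4*k)).Walk u u) :=
  ((zp k p).map fun uc => UC (4*k) (twb k uc.1.2) uc.2 uc.1.1 (8*uc.1.2)).flatten

lemma zp_lens (k p : ℕ) : (alloc (capsL k) p).length = (units k).length := by
  rw [alloc_length, capsL, List.length_map]

lemma zp_valid {k p : ℕ} (hp1 : p ≠ 1) :
    ∀ uc ∈ zp k p, (uc.2 ≤ capW (twb k uc.1.2) ∧ uc.2 ≠ 1) ∧ uc.1.1 < k ∧ uc.1.2 < mm k := by
  intro uc h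
  have hmem := List.of_mem_zip h
  have h2 : (capW (twb k uc.1.2), uc.2) ∈ (capsL k).zip (alloc (capsL k) p) := by
    rw [capsL, List.zip_map_left]
    exact List.mem_map.2 ⟨uc, h, rfl⟩
  have h3 := alloc_valid (capsL k) (caps_ge4 k) p hp1 _ h2
  have h4 := mem_units.1 hmem.1
  exact ⟨⟨h3.1, h3.2⟩, h4.1, h4.2⟩

lemma unit_bounds {k : ℕ} (hk : 2 ≤ k) {i J : ℕ} (h1 : i < k) (h2 : J < mm k) :
    4*i+4 ≤ 4*k ∧ 8*J + Wd (twb k J) ≤ 4*k := by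
  refine ⟨by omega, ?_⟩
  cases htw : twb k J
  · simp only [Wd]
    simp only [mm] at h2
    omega
  · have hh := twb_iff.1 htw
    simp only [Wd]
    simp only [mm] at h2 hh ⊢
    omega

lemma zp_snd (k p : ℕ) : (zp k p).map (fun uc => uc.2) = alloc (capsL k) p := by
  rw [zp]
  exact List.map_snd_zip (le_of_eq (by rw [zp_lens]))

lemma zp_fst (k p : ℕ) : (zp k p).map (fun uc => uc.1) = units k := by
  rw [zp]
  exact List.map_fst_zip (le_of_eq (by rw [zp_lens]))

lemma pathsL_length {k p : ℕ} [NeZero (4*k)] (hp1 : p ≠ 1) (hple : p ≤ (capsL k).sum) :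
    (pathsL k p).length = p := by
  rw [pathsL, List.length_flatten, List.map_map]
  have h1 : List.map (List.length ∘ fun uc : (ℕ × ℕ) × ℕ =>
      UP (4*k) (twb k uc.1.2) uc.2 uc.1.1 (8*uc.1.2)) (zp k p) =
      List.map (fun uc => uc.2) (zp k p) :=
    List.map_congr_left (fun uc huc => UP_length (4*k) _ _ _ _ (zp_valid hp1 uc huc).1)
  rw [h1, zp_snd, alloc_sum _ (caps_ge4 k) _ hple]

lemma cycsL_length {k p : ℕ} [NeZero (4*k)] (hp1 : p ≠ 1) (hple : p ≤ (capsL k).sum) :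
    (cycsL k p).length = (capsL k).sum - p := by
  rw [cycsL, List.length_flatten, List.map_map]
  have h1 : List.map (List.length ∘ fun uc : (ℕ × ℕ) × ℕ =>
      UC (4*k) (twb k uc.1.2) uc.2 uc.1.1 (8*uc.1.2)) (zp k p) =
      List.map (fun uc => capW (twb k uc.1.2) - uc.2) (zp k p) :=
    List.map_congr_left (fun uc huc => UC_length (4*k) _ _ _ _ (zp_valid hp1 uc huc).1)
  rw [h1, sum_map_sub _ _ _ (fun uc huc => (zp_valid hp1 uc huc).1.1)]
  have h2 : (zp k p).map (fun uc => capW (twb k uc.1.2)) = capsL k := by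
    have : (fun uc : (ℕ × ℕ) × ℕ => capW (twb k uc.1.2)) =
        (fun u : ℕ × ℕ => capW (twb k u.2)) ∘ (fun uc : (ℕ × ℕ) × ℕ => uc.1) := rfl
    rw [this, ← List.map_map, zp_fst, capsL]
  rw [h2, zp_snd, alloc_sum _ (caps_ge4 k) _ hple]

lemma units_sum_ind {k : ℕ} (hk : 2 ≤ k) (a b : Fin (4*k)) :
    ((units k).map (fun u => if 4*u.1 ≤ a.val ∧ a.val < 4*u.1+4 ∧
        8*u.2 ≤ b.val ∧ b.val < 8*u.2 + Wd (twb k u.2) then 1 else 0)).sum = 1 := by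
  have hib : a.val < 4*k := a.isLt
  have hjb : b.val < 4*k := b.isLt
  have hm1 : 1 ≤ mm k := by simp only [mm]; omega
  have hmk : mm k = k / 2 := rfl
  rw [units, List.map_flatMap, sum_flatMapN, lrange_sum]
  have hinner : ∀ i ∈ Finset.range k,
      ((((List.range (mm k)).map fun J => (i, J)).map (fun u => if 4*u.1 ≤ a.val ∧ a.val < 4*u.1+4 ∧
        8*u.2 ≤ b.val ∧ b.val < 8*u.2 + Wd (twb k u.2) then 1 else 0))).sum =
      if i = a.val / 4 then 1 else 0 := by
    intro i _
    rw [List.map_map]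
    have hcmp : ((fun u : ℕ × ℕ => if 4*u.1 ≤ a.val ∧ a.val < 4*u.1+4 ∧
        8*u.2 ≤ b.val ∧ b.val < 8*u.2 + Wd (twb k u.2) then 1 else 0) ∘ fun J => (i, J)) =
        fun J => if 4*i ≤ a.val ∧ a.val < 4*i+4 ∧
          8*J ≤ b.val ∧ b.val < 8*J + Wd (twb k J) then 1 else 0 := rfl
    rw [hcmp, lrange_sum]
    by_cases hi : i = a.val / 4
    · rw [if_pos hi]
      subst hi
      rw [Finset.sum_eq_single (min (b.val / 8) (mm k - 1))]
      · rw [if_pos]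
        refine ⟨by omega, by omega, ?_, ?_⟩
        · omega
        · cases htw : twb k (min (b.val / 8) (mm k - 1))
          · have hh : ¬(k % 2 = 1 ∧ min (b.val / 8) (mm k - 1) = mm k - 1) := by
              rw [← twb_iff, htw]; simp
            simp only [Wd]
            omega
          · have hh := twb_iff.1 htw
            simp only [Wd]
            omega
      · intro J hJ hne
        rw [Finset.mem_range] at hJ
        rw [if_neg]
        rintro ⟨c1, c2, c3, c4⟩
        apply hne
        cases htw : twb k J
        · have hh : ¬(k % 2 = 1 ∧ J = mm k - 1) := by
            rw [← twb_iff, htw]; simp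
          rw [htw] at c4
          simp only [Wd] at c4
          omega
        · have hh := twb_iff.1 htw
          rw [htw] at c4
          simp only [Wd] at c4
          omega
      · intro hnm
        exact absurd (Finset.mem_range.2 (by omega)) hnm
    · rw [if_neg hi]
      apply Finset.sum_eq_zero
      intro J _
      rw [if_neg]
      rintro ⟨c1, c2, _, _⟩
      exact hi (by omega)
  rw [Finset.sum_congr rfl hinner, Finset.sum_ite_eq' (Finset.range k) (a.val / 4)]
  rw [if_pos (Finset.mem_range.2 (by omega))]

lemma pathsL_mem {k p : ℕ} [NeZero (4*k)] (hk : 2 ≤ k) (hp1 : p ≠ 1) :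
    ∀ x ∈ pathsL k p, x.2.2.IsPath ∧ x.2.2.length = 8 := by
  intro x hx
  rw [pathsL, List.mem_flatten] at hx
  obtain ⟨l, hl, hxl⟩ := hx
  obtain ⟨uc, huc, rfl⟩ := List.mem_map.1 hl
  obtain ⟨hval, hb1, hb2⟩ := zp_valid hp1 uc huc
  obtain ⟨hbi, hbo⟩ := unit_bounds hk hb1 hb2
  exact UP_mem (4*k) _ _ _ _ hval hbi hbo x hxl

lemma cycsL_mem {k p : ℕ} [NeZero (4*k)] (hk : 2 ≤ k) (hp1 : p ≠ 1) :
    ∀ x ∈ cycsL k p, x.2.IsCycle ∧ x.2.length = 8 := by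
  intro x hx
  rw [cycsL, List.mem_flatten] at hx
  obtain ⟨l, hl, hxl⟩ := hx
  obtain ⟨uc, huc, rfl⟩ := List.mem_map.1 hl
  obtain ⟨hval, hb1, hb2⟩ := zp_valid hp1 uc huc
  obtain ⟨hbi, hbo⟩ := unit_bounds hk hb1 hb2
  exact UC_mem (4*k) _ _ _ _ hval hbi hbo x hxl

lemma two_flatten_sum {α β γ : Type*} (l : List α) (F : α → List β) (G : α → List γ)
    (f : β → ℕ) (g : γ → ℕ) (ind : α → ℕ)
    (h : ∀ x ∈ l, ((F x).map f).sum + ((G x).map g).sum = ind x) :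
    ((l.map F).flatten.map f).sum + ((l.map G).flatten.map g).sum = (l.map ind).sum := by
  induction l with
  | nil => rfl
  | cons x xs ih =>
    have h1 := h x (by simp)
    have h2 : ∀ y ∈ xs, ((F y).map f).sum + ((G y).map g).sum = ind y :=
      fun y hy => h y (by simp [hy])
    simp only [List.map_cons, List.flatten_cons, List.map_append, List.sum_append,
      List.sum_cons]
    have := ih h2
    omega

lemma global_count {k p : ℕ} [NeZero (4*k)] (hk : 2 ≤ k) (hp1 : p ≠ 1) (a b : Fin (4*k)) :
    ((pathsL k p).map (fun x => x.2.2.edges.count s(Sum.inl a, Sum.inr b))).sum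
      + ((cycsL k p).map (fun x => x.2.edges.count s(Sum.inl a, Sum.inr b))).sum = 1 := by
  rw [pathsL, cycsL]
  rw [two_flatten_sum (zp k p)
    (fun uc => UP (4*k) (twb k uc.1.2) uc.2 uc.1.1 (8*uc.1.2))
    (fun uc => UC (4*k) (twb k uc.1.2) uc.2 uc.1.1 (8*uc.1.2))
    _ _
    (fun uc => if 4*uc.1.1 ≤ a.val ∧ a.val < 4*uc.1.1+4 ∧
          8*uc.1.2 ≤ b.val ∧ b.val < 8*uc.1.2 + Wd (twb k uc.1.2) then 1 else 0)
    ?hpt]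
  case hpt =>
    intro uc huc
    obtain ⟨hval, hb1, hb2⟩ := zp_valid hp1 uc huc
    obtain ⟨hbi, hbo⟩ := unit_bounds hk hb1 hb2
    have hU := U_count (4*k) (twb k uc.1.2) uc.2 uc.1.1 (8*uc.1.2) hval hbi hbo a b
    rw [List.count_append] at hU
    have e1 : (PJ (4*k) (UP (4*k) (twb k uc.1.2) uc.2 uc.1.1 (8*uc.1.2))).count
        s(Sum.inl a, Sum.inr b) =
        ((UP (4*k) (twb k uc.1.2) uc.2 uc.1.1 (8*uc.1.2)).map
          (fun x => x.2.2.edges.count s(Sum.inl a, Sum.inr b))).sum := by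
      rw [PJ, List.count_flatten, List.map_map]
      rfl
    have e2 : (CJ (4*k) (UC (4*k) (twb k uc.1.2) uc.2 uc.1.1 (8*uc.1.2))).count
        s(Sum.inl a, Sum.inr b) =
        ((UC (4*k) (twb k uc.1.2) uc.2 uc.1.1 (8*uc.1.2)).map
          (fun x => x.2.edges.count s(Sum.inl a, Sum.inr b))).sum := by
      rw [CJ, List.count_flatten, List.map_map]
      rfl
    rw [e1, e2] at hU
    exact hU
  have hfst : (zp k p).map (fun uc : (ℕ × ℕ) × ℕ => if 4*uc.1.1 ≤ a.val ∧ a.val < 4*uc.1.1+4 ∧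
      8*uc.1.2 ≤ b.val ∧ b.val < 8*uc.1.2 + Wd (twb k uc.1.2) then 1 else 0) =
      (units k).map (fun u : ℕ × ℕ => if 4*u.1 ≤ a.val ∧ a.val < 4*u.1+4 ∧
      8*u.2 ≤ b.val ∧ b.val < 8*u.2 + Wd (twb k u.2) then 1 else 0) := by
    rw [show (fun uc : (ℕ × ℕ) × ℕ => if 4*uc.1.1 ≤ a.val ∧ a.val < 4*uc.1.1+4 ∧
      8*uc.1.2 ≤ b.val ∧ b.val < 8*uc.1.2 + Wd (twb k uc.1.2) then 1 else 0) =
      ((fun u : ℕ × ℕ => if 4*u.1 ≤ a.val ∧ a.val < 4*u.1+4 ∧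
      8*u.2 ≤ b.val ∧ b.val < 8*u.2 + Wd (twb k u.2) then 1 else 0) ∘ fun uc => uc.1) from rfl,
      ← List.map_map, zp_fst]
  rw [hfst]
  exact units_sum_ind hk a b

end D8


open D8 in
theorem stmt_15 (k : ℕ) (hk : 2 ≤ k) (p q : ℕ)
    (hpq : 8 * (p + q) = 16 * k ^ 2) (hp : p ≠ 1) :
    IsDecomp8 (completeBipartiteGraph (Fin (4 * k)) (Fin (4 * k))) 1 p q := by
  haveI : NeZero (4*k) := ⟨by omega⟩
  have hcs : (capsL k).sum = 2*(k*k) := capsum k hk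
  have hpq' : p + q = 2*(k*k) := by
    have h1 : 16 * k^2 = 8 * (2*(k*k)) := by ring
    rw [h1] at hpq
    omega
  have hple : p ≤ (capsL k).sum := by omega
  have hlp : (pathsL k p).length = p := pathsL_length hp hple
  have hlq : (cycsL k p).length = q := by
    rw [cycsL_length hp hple]
    omega
  refine ⟨fun t => (pathsL k p).get (Fin.cast hlp.symm t),
          fun t => (cycsL k p).get (Fin.cast hlq.symm t), ?_, ?_, ?_⟩
  · intro t
    exact pathsL_mem hk hp _ (List.get_mem _ _)
  · intro t
    exact cycsL_mem hk hp _ (List.get_mem _ _)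
  · intro e he
    have hsum1 : ∀ e' : Sym2 (V (4*k)),
        (∑ t : Fin p, ((pathsL k p).get (Fin.cast hlp.symm t)).2.2.edges.count e')
        = ((pathsL k p).map (fun x => x.2.2.edges.count e')).sum := by
      intro e'
      rw [← sum_get]
      exact Fintype.sum_equiv (finCongr hlp.symm) _ _ (fun t => rfl)
    have hsum2 : ∀ e' : Sym2 (V (4*k)),
        (∑ t : Fin q, ((cycsL k p).get (Fin.cast hlq.symm t)).2.edges.count e')
        = ((cycsL k p).map (fun x => x.2.edges.count e')).sum := by
      intro e'
      rw [← sum_get]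
      exact Fintype.sum_equiv (finCongr hlq.symm) _ _ (fun t => rfl)
    revert he
    refine Sym2.ind (fun x y => ?_) e
    intro he
    rw [SimpleGraph.mem_edgeSet] at he
    rcases x with x | x <;> rcases y with y | y
    · exfalso
      simp [completeBipartiteGraph] at he
    · rw [hsum1, hsum2]
      exact global_count hk hp x y
    · rw [show s(Sum.inr x, Sum.inl y) = s(Sum.inl y, Sum.inr x) from Sym2.eq_swap]
      rw [hsum1, hsum2]
      exact global_count hk hp y x
    · exfalso
      simp [completeBipartiteGraph] at he
end
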